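/- arXiv:1608.06279 — 6 statements merged into one kernel-verified Lean document; each statement's English description precedes it below -/
import Mathlib

section
/- Let n ≥ 1 and 1 ≤ k ≤ n, and let P : B^n → ℝ^k be the restriction to the closed unit ball B^n ⊂ ℝ^n of the orthogonal projection onto the first k coordinates. Then the fiber P⁻¹(0), which is the (n−k)-dimensional unit ball embedded in ℝ^n, has lower (n−k)-dimensional Minkowski content exactly v_{n−k}, and every fiber P⁻¹(y) with y ∈ ℝ^k has lower (n−k)-dimensional Minkowski content at most v_{n−k}. (This shows the ball waist inequality is tight for linear maps.) -/
open MeasureTheory Metric Filter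

/-- The Lebesgue volume of the unit Euclidean ball in `ℝ^j`. -/
noncomputable def unitBallVol (j : ℕ) : ℝ :=
  (volume (Metric.ball (0 : EuclideanSpace ℝ (Fin j)) 1)).toReal

/-- The lower `m`-dimensional Minkowski content of a set `X ⊆ ℝ^n`:
`liminf_{t → 0+} vol_n(X + t) / (v_{n-m} · t^{n-m})`, where `X + t` is the open
`t`-neighborhood of `X`. -/
noncomputable def lowerMinkowskiContent (n m : ℕ) (X : Set (EuclideanSpace ℝ (Fin n))) :
    ENNReal :=
  Filter.liminf
    (fun t : ℝ => volume (Metric.thickening t X) /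
      ENNReal.ofReal (unitBallVol (n - m) * t ^ (n - m)))
    (nhdsWithin 0 (Set.Ioi 0))

section waist
noncomputable section
variable (n k : ℕ)

def waistE (h : k + (n - k) = n) : (Fin k ⊕ Fin (n - k)) ≃ Fin n :=
  finSumFinEquiv.trans (finCongr h)

def waistPhi (h : k + (n - k) = n) :
    EuclideanSpace ℝ (Fin n) ≃ᵐ EuclideanSpace ℝ (Fin k) × EuclideanSpace ℝ (Fin (n - k)) :=
  (MeasurableEquiv.toLp 2 (Fin n → ℝ)).symm.trans <|
  ((MeasurableEquiv.piCongrLeft (fun _ => ℝ) (waistE n k h)).symm).trans <|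
  (MeasurableEquiv.sumPiEquivProdPi (fun _ => ℝ)).trans <|
  ((MeasurableEquiv.toLp 2 (Fin k → ℝ)).symm.symm.prodCongr
    (MeasurableEquiv.toLp 2 (Fin (n - k) → ℝ)).symm.symm)

variable {n k} (h : k + (n - k) = n)

lemma waistPhi_fst (x : EuclideanSpace ℝ (Fin n)) (i : Fin k) :
    (waistPhi n k h x).1 i = x (waistE n k h (Sum.inl i)) := rfl

lemma waistPhi_snd (x : EuclideanSpace ℝ (Fin n)) (i : Fin (n - k)) :
    (waistPhi n k h x).2 i = x (waistE n k h (Sum.inr i)) := rfl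

lemma waistPhi_sub_fst (x z : EuclideanSpace ℝ (Fin n)) :
    (waistPhi n k h (x - z)).1 = (waistPhi n k h x).1 - (waistPhi n k h z).1 := rfl

lemma waistPhi_sub_snd (x z : EuclideanSpace ℝ (Fin n)) :
    (waistPhi n k h (x - z)).2 = (waistPhi n k h x).2 - (waistPhi n k h z).2 := rfl

lemma waistPhi_mp : MeasurePreserving (waistPhi n k h) volume volume := by
  have hA := EuclideanSpace.volume_preserving_symm_measurableEquiv_toLp (Fin n)
  have hB := (volume_measurePreserving_piCongrLeft (fun _ : Fin n => ℝ) (waistE n k h)).symm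
  have hC := volume_measurePreserving_sumPiEquivProdPi (fun _ : Fin k ⊕ Fin (n - k) => ℝ)
  have hD := ((EuclideanSpace.volume_preserving_symm_measurableEquiv_toLp (Fin k)).symm _).prod
    ((EuclideanSpace.volume_preserving_symm_measurableEquiv_toLp (Fin (n - k))).symm _)
  exact hD.comp (hC.comp (hB.comp hA))

lemma waist_norm_sq (x : EuclideanSpace ℝ (Fin n)) :
    ‖x‖ ^ 2 = ‖(waistPhi n k h x).1‖ ^ 2 + ‖(waistPhi n k h x).2‖ ^ 2 := by
  have e1 : ‖x‖ ^ 2 = ∑ i, x i ^ 2 := by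
    rw [EuclideanSpace.norm_eq, Real.sq_sqrt (by positivity)]
    simp [Real.norm_eq_abs, sq_abs]
  have e2 : ‖(waistPhi n k h x).1‖ ^ 2 = ∑ i : Fin k, x (waistE n k h (Sum.inl i)) ^ 2 := by
    rw [EuclideanSpace.norm_eq, Real.sq_sqrt (by positivity)]
    simp [waistPhi_fst, Real.norm_eq_abs, sq_abs]
  have e3 : ‖(waistPhi n k h x).2‖ ^ 2 = ∑ i : Fin (n - k), x (waistE n k h (Sum.inr i)) ^ 2 := by
    rw [EuclideanSpace.norm_eq, Real.sq_sqrt (by positivity)]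
    simp [waistPhi_snd, Real.norm_eq_abs, sq_abs]
  rw [e1, e2, e3, ← Fintype.sum_sum_type (fun s => x (waistE n k h s) ^ 2)]
  exact (Fintype.sum_equiv (waistE n k h) _ _ fun s => rfl).symm

lemma waist_fst_le (x : EuclideanSpace ℝ (Fin n)) : ‖(waistPhi n k h x).1‖ ≤ ‖x‖ := by
  have := waist_norm_sq h x
  nlinarith [norm_nonneg x, norm_nonneg (waistPhi n k h x).1, sq_nonneg ‖(waistPhi n k h x).2‖]

lemma waist_snd_le (x : EuclideanSpace ℝ (Fin n)) : ‖(waistPhi n k h x).2‖ ≤ ‖x‖ := by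
  have := waist_norm_sq h x
  nlinarith [norm_nonneg x, norm_nonneg (waistPhi n k h x).2, sq_nonneg ‖(waistPhi n k h x).1‖]

end
end waist

/-- Tightness of the ball waist inequality: for the orthogonal projection
`P : B^n → ℝ^k` onto the first `k` coordinates, the central fiber `P⁻¹(0)` has lower
`(n-k)`-dimensional Minkowski content exactly `v_{n-k}`, and every fiber has lower
Minkowski content at most `v_{n-k}`. -/
theorem proj_fiber_tight (n k : ℕ) (hn : 1 ≤ n) (hk1 : 1 ≤ k) (hkn : k ≤ n)
    (P : EuclideanSpace ℝ (Fin n) → EuclideanSpace ℝ (Fin k))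
    (hP : P = fun x => WithLp.toLp 2 (fun i : Fin k => x (Fin.castLE hkn i))) :
    lowerMinkowskiContent n (n - k) (Metric.closedBall 0 1 ∩ P ⁻¹' {0}) =
      ENNReal.ofReal (unitBallVol (n - k)) ∧
    ∀ y : EuclideanSpace ℝ (Fin k),
      lowerMinkowskiContent n (n - k) (Metric.closedBall 0 1 ∩ P ⁻¹' {y}) ≤
        ENNReal.ofReal (unitBallVol (n - k)) := by
  have h : k + (n - k) = n := Nat.add_sub_cancel' hkn
  set Φ := waistPhi n k h with hΦdef
  have hmp := waistPhi_mp h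
  haveI : Nontrivial (EuclideanSpace ℝ (Fin k)) :=
    ⟨⟨EuclideanSpace.single ⟨0, hk1⟩ (1 : ℝ), 0, by
      intro hc
      have := congrArg (fun v : EuclideanSpace ℝ (Fin k) => v ⟨0, hk1⟩) hc
      simp [EuclideanSpace.single_apply] at this⟩⟩
  -- P is the first component of Φ
  have hPfst : ∀ x, P x = (Φ x).1 := by
    intro x; ext i
    rw [hP]
    exact congrArg x.ofLp (by ext; simp [waistE])
  -- abbreviations
  set ck : ENNReal := volume (Metric.ball (0 : EuclideanSpace ℝ (Fin k)) 1) with hck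
  set cm : ENNReal := volume (Metric.ball (0 : EuclideanSpace ℝ (Fin (n - k))) 1) with hcm
  have hckt : ck ≠ ⊤ := measure_ball_lt_top.ne
  have hcmt : cm ≠ ⊤ := measure_ball_lt_top.ne
  have hck0 : ck ≠ 0 := (measure_ball_pos _ _ one_pos).ne'
  -- product volumes
  have hvol : ∀ (S : Set (EuclideanSpace ℝ (Fin k))) (T : Set (EuclideanSpace ℝ (Fin (n - k)))),
      volume (Φ ⁻¹' (S ×ˢ T)) = volume S * volume T := by
    intro S T
    rw [hmp.measure_preimage_equiv, Measure.volume_eq_prod, Measure.prod_prod]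
  -- ball volumes
  have hcbk : ∀ (y : EuclideanSpace ℝ (Fin k)) (t : ℝ), 0 ≤ t →
      volume (Metric.closedBall y t) = ENNReal.ofReal (t ^ k) * ck := by
    intro y t ht
    rw [Measure.addHaar_closedBall _ _ ht, finrank_euclideanSpace_fin]
  have hbk : ∀ t : ℝ, 0 ≤ t →
      volume (Metric.ball (0 : EuclideanSpace ℝ (Fin k)) t) = ENNReal.ofReal (t ^ k) * ck := by
    intro t ht
    rw [Measure.addHaar_ball _ _ ht, finrank_euclideanSpace_fin]
  have hcbm : ∀ t : ℝ, 0 ≤ t →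
      volume (Metric.closedBall (0 : EuclideanSpace ℝ (Fin (n - k))) t)
        = ENNReal.ofReal (t ^ (n - k)) * cm := by
    intro t ht
    rw [Measure.addHaar_closedBall _ _ ht, finrank_euclideanSpace_fin]
  -- the denominator
  have hnn : n - (n - k) = k := Nat.sub_sub_self hkn
  have hden : ∀ t : ℝ,
      ENNReal.ofReal (unitBallVol (n - (n - k)) * t ^ (n - (n - k))) = ck * ENNReal.ofReal (t ^ k) := by
    intro t
    rw [hnn]
    unfold unitBallVol
    rw [ENNReal.ofReal_mul (by exact ENNReal.toReal_nonneg),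
      ENNReal.ofReal_toReal measure_ball_lt_top.ne, hck]
  -- inclusion: thickening inside product of closed balls
  have hup : ∀ (t : ℝ), ∀ (y : EuclideanSpace ℝ (Fin k)),
      Metric.thickening t (Metric.closedBall 0 1 ∩ P ⁻¹' {y}) ⊆
        Φ ⁻¹' (Metric.closedBall y t ×ˢ Metric.closedBall 0 (1 + t)) := by
    intro t y x hx
    obtain ⟨z, ⟨hz1, hz2⟩, hdz⟩ := Metric.mem_thickening_iff.1 hx
    have hz2' : (Φ z).1 = y := by rw [← hPfst]; exact hz2
    have hz1' : ‖z‖ ≤ 1 := by simpa using mem_closedBall_zero_iff.1 (by simpa using hz1)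
    have hxz : ‖x - z‖ < t := by rwa [← dist_eq_norm]
    constructor
    · show (Φ x).1 ∈ Metric.closedBall y t
      rw [Metric.mem_closedBall, dist_eq_norm, ← hz2', ← waistPhi_sub_fst h]
      exact (waist_fst_le h (x - z)).trans hxz.le
    · show (Φ x).2 ∈ Metric.closedBall 0 (1 + t)
      rw [Metric.mem_closedBall, dist_zero_right]
      calc ‖(Φ x).2‖ = ‖(Φ z).2 + ((Φ x).2 - (Φ z).2)‖ := by
            rw [show (Φ z).2 + ((Φ x).2 - (Φ z).2) = (Φ x).2 by abel]
        _ ≤ ‖(Φ z).2‖ + ‖(Φ x).2 - (Φ z).2‖ := norm_add_le _ _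
        _ ≤ ‖z‖ + ‖x - z‖ :=
            add_le_add (waist_snd_le h z)
              (by rw [← waistPhi_sub_snd h]; exact waist_snd_le h (x - z))
        _ ≤ 1 + t := add_le_add hz1' hxz.le
  -- inclusion: product inside thickening (central fiber)
  have hlow : ∀ t : ℝ, 0 < t →
      Φ ⁻¹' (Metric.ball 0 t ×ˢ Metric.closedBall 0 1) ⊆
        Metric.thickening t (Metric.closedBall 0 1 ∩ P ⁻¹' {0}) := by
    intro t ht x hx
    obtain ⟨hx1, hx2⟩ := hx
    have hx1' : ‖(Φ x).1‖ < t := by simpa using mem_ball_zero_iff.1 hx1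
    have hx2' : ‖(Φ x).2‖ ≤ 1 := by simpa using mem_closedBall_zero_iff.1 hx2
    set z := Φ.symm (0, (Φ x).2) with hzdef
    have hz : Φ z = (0, (Φ x).2) := Φ.apply_symm_apply _
    have hz1 : (Φ z).1 = 0 := by rw [hz]
    have hz2 : (Φ z).2 = (Φ x).2 := by rw [hz]
    have hznorm : ‖z‖ ≤ 1 := by
      have hsq := waist_norm_sq h z
      rw [hz1, hz2] at hsq
      simp only [norm_zero] at hsq
      nlinarith [norm_nonneg z, norm_nonneg (Φ x).2]
    refine Metric.mem_thickening_iff.2 ⟨z, ⟨?_, ?_⟩, ?_⟩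
    · simpa using mem_closedBall_zero_iff.2 hznorm
    · show P z ∈ ({0} : Set _)
      rw [hPfst, hz1]; rfl
    · have hsq := waist_norm_sq h (x - z)
      rw [waistPhi_sub_fst h, waistPhi_sub_snd h, hz1, hz2, sub_zero, sub_self] at hsq
      simp only [norm_zero] at hsq
      rw [dist_eq_norm]
      nlinarith [norm_nonneg (x - z), norm_nonneg (Φ x).1]
  -- key volume bounds
  have fub : ∀ (y : EuclideanSpace ℝ (Fin k)), ∀ t ∈ Set.Ioi (0 : ℝ),
      volume (Metric.thickening t (Metric.closedBall 0 1 ∩ P ⁻¹' {y})) /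
        ENNReal.ofReal (unitBallVol (n - (n - k)) * t ^ (n - (n - k)))
      ≤ cm * ENNReal.ofReal ((1 + t) ^ (n - k)) := by
    intro y t ht
    have ht' : (0 : ℝ) < t := ht
    rw [hden t]
    have hd0 : ck * ENNReal.ofReal (t ^ k) ≠ 0 := by
      simp only [ne_eq, mul_eq_zero, not_or]
      exact ⟨hck0, by simp [ENNReal.ofReal_eq_zero, not_le, pow_pos ht']⟩
    have hdt : ck * ENNReal.ofReal (t ^ k) ≠ ⊤ := ENNReal.mul_ne_top hckt ENNReal.ofReal_ne_top
    rw [ENNReal.div_le_iff hd0 hdt]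
    calc volume (Metric.thickening t (Metric.closedBall 0 1 ∩ P ⁻¹' {y}))
        ≤ volume (Φ ⁻¹' (Metric.closedBall y t ×ˢ Metric.closedBall 0 (1 + t))) :=
          measure_mono (hup t y)
      _ = (ENNReal.ofReal (t ^ k) * ck) * (ENNReal.ofReal ((1 + t) ^ (n - k)) * cm) := by
          rw [hvol, hcbk y t ht'.le, hcbm (1 + t) (by linarith)]
      _ = cm * ENNReal.ofReal ((1 + t) ^ (n - k)) * (ck * ENNReal.ofReal (t ^ k)) := by ring
  have flb : ∀ t ∈ Set.Ioi (0 : ℝ),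
      cm ≤ volume (Metric.thickening t (Metric.closedBall 0 1 ∩ P ⁻¹' {0})) /
        ENNReal.ofReal (unitBallVol (n - (n - k)) * t ^ (n - (n - k))) := by
    intro t ht
    have ht' : (0 : ℝ) < t := ht
    rw [hden t]
    have hd0 : ck * ENNReal.ofReal (t ^ k) ≠ 0 := by
      simp only [ne_eq, mul_eq_zero, not_or]
      exact ⟨hck0, by simp [ENNReal.ofReal_eq_zero, not_le, pow_pos ht']⟩
    have hdt : ck * ENNReal.ofReal (t ^ k) ≠ ⊤ := ENNReal.mul_ne_top hckt ENNReal.ofReal_ne_top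
    rw [ENNReal.le_div_iff_mul_le (Or.inl hd0) (Or.inl hdt)]
    calc cm * (ck * ENNReal.ofReal (t ^ k))
        = (ENNReal.ofReal (t ^ k) * ck) * (ENNReal.ofReal ((1 : ℝ) ^ (n - k)) * cm) := by
          rw [one_pow, ENNReal.ofReal_one, one_mul]; ring
      _ = volume (Φ ⁻¹' (Metric.ball 0 t ×ˢ Metric.closedBall 0 1)) := by
          rw [hvol, hbk t ht'.le, hcbm 1 zero_le_one]
      _ ≤ volume (Metric.thickening t (Metric.closedBall 0 1 ∩ P ⁻¹' {0})) :=
          measure_mono (hlow t ht')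
  -- liminf of the upper bound function
  have hcm_eq : ENNReal.ofReal (unitBallVol (n - k)) = cm :=
    ENNReal.ofReal_toReal hcmt
  have htendsto : Tendsto (fun t : ℝ => cm * ENNReal.ofReal ((1 + t) ^ (n - k)))
      (nhdsWithin 0 (Set.Ioi 0)) (nhds cm) := by
    have h1 : Tendsto (fun t : ℝ => (1 + t) ^ (n - k)) (nhdsWithin 0 (Set.Ioi 0)) (nhds 1) := by
      have : Continuous (fun t : ℝ => (1 + t) ^ (n - k)) := (continuous_const.add continuous_id).pow _
      have := this.tendsto' 0 1 (by norm_num)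
      exact this.mono_left nhdsWithin_le_nhds
    have h2 : Tendsto (fun t : ℝ => ENNReal.ofReal ((1 + t) ^ (n - k)))
        (nhdsWithin 0 (Set.Ioi 0)) (nhds 1) := by
      have := (ENNReal.continuous_ofReal.tendsto 1).comp h1
      rw [ENNReal.ofReal_one] at this
      exact this
    have := ENNReal.Tendsto.const_mul h2 (Or.inr hcmt)
    simpa using this
  have hne : (nhdsWithin (0:ℝ) (Set.Ioi 0)).NeBot := nhdsGT_neBot 0
  constructor
  · apply le_antisymm
    · calc lowerMinkowskiContent n (n - k) (Metric.closedBall 0 1 ∩ P ⁻¹' {0})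
          ≤ Filter.liminf (fun t : ℝ => cm * ENNReal.ofReal ((1 + t) ^ (n - k)))
            (nhdsWithin 0 (Set.Ioi 0)) := by
            exact Filter.liminf_le_liminf (eventually_nhdsWithin_of_forall (fub 0))
        _ = cm := htendsto.liminf_eq
        _ = ENNReal.ofReal (unitBallVol (n - k)) := hcm_eq.symm
    · rw [hcm_eq]
      calc cm = Filter.liminf (fun _ : ℝ => cm) (nhdsWithin 0 (Set.Ioi 0)) :=
            (Filter.liminf_const cm).symm
        _ ≤ _ := Filter.liminf_le_liminf (eventually_nhdsWithin_of_forall flb)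
  · intro y
    calc lowerMinkowskiContent n (n - k) (Metric.closedBall 0 1 ∩ P ⁻¹' {y})
        ≤ Filter.liminf (fun t : ℝ => cm * ENNReal.ofReal ((1 + t) ^ (n - k)))
          (nhdsWithin 0 (Set.Ioi 0)) := by
          exact Filter.liminf_le_liminf (eventually_nhdsWithin_of_forall (fub y))
      _ = cm := htendsto.liminf_eq
      _ = ENNReal.ofReal (unitBallVol (n - k)) := hcm_eq.symm
end

section
/- Let n ≥ 1, 0 ≤ k ≤ n, and let L : ℝ^n → ℝ^n be the diagonal linear map L(x_1, …, x_n) = (a_1 x_1, …, a_n x_n) with 0 < a_1 ≤ a_2 ≤ … ≤ a_n. Then for every set X ⊆ ℝ^n the lower k-dimensional Minkowski content satisfies the upper bound M_k(L(X)) ≤ a_{n−k+1} a_{n−k+2} ⋯ a_n · M_k(X). -/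
open MeasureTheory Metric Filter

set_option linter.unusedVariables false
set_option linter.unusedTactic false
set_option linter.deprecated false

section Aux

lemma kp_chain (l u d : ℕ → ℝ) (hd : ∀ i, d i ≤ d (i + 1)) (hu : ∀ i, u i ≤ u (i + 1))
    (hlu : ∀ i, l i ≤ u i) (hov : ∀ i, l (i + 1) ≤ u i) (m : ℕ) :
    ENNReal.ofReal (u m - l 0) ≤
      volume (⋃ i ∈ Finset.range (m + 1), Set.Ioo (l i + d i) (u i + d i)) := by
  induction m with
  | zero =>
    have : (⋃ i ∈ Finset.range 1, Set.Ioo (l i + d i) (u i + d i)) =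
        Set.Ioo (l 0 + d 0) (u 0 + d 0) := by
      simp [Finset.range_one]
    rw [this, Real.volume_Ioo]
    exact le_of_eq (by norm_num)
  | succ m ih =>
    have hmono : Monotone (fun i => u i + d i) :=
      monotone_nat_of_le_succ fun i => add_le_add (hu i) (hd i)
    set A := ⋃ i ∈ Finset.range (m + 1), Set.Ioo (l i + d i) (u i + d i) with hA
    have hAsub : A ⊆ Set.Iio (u m + d m) := by
      intro x hx
      simp only [hA, Set.mem_iUnion, Finset.mem_range] at hx
      obtain ⟨i, hi, hx⟩ := hx
      exact lt_of_lt_of_le hx.2 (hmono (Nat.lt_succ_iff.mp hi))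
    set P := Set.Ioo (max (l (m + 1) + d (m + 1)) (u m + d m)) (u (m + 1) + d (m + 1)) with hP
    have hdisj : Disjoint A P := by
      rw [Set.disjoint_left]
      intro x hx hxP
      have h1 := hAsub hx
      have h2 := hxP.1
      simp only [Set.mem_Iio] at h1
      have := le_max_right (l (m + 1) + d (m + 1)) (u m + d m)
      linarith
    have hsub2 : A ∪ P ⊆ ⋃ i ∈ Finset.range (m + 2), Set.Ioo (l i + d i) (u i + d i) := by
      have h1 : Finset.range (m + 2) = insert (m + 1) (Finset.range (m + 1)) :=
        Finset.range_add_one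
      rw [h1, Finset.set_biUnion_insert]
      apply Set.union_subset
      · exact Set.subset_union_right
      · refine Set.Subset.trans ?_ Set.subset_union_left
        exact Set.Ioo_subset_Ioo (le_max_left _ _) le_rfl
    calc ENNReal.ofReal (u (m + 1) - l 0)
        ≤ ENNReal.ofReal ((u m - l 0) +
            ((u (m + 1) + d (m + 1)) - max (l (m + 1) + d (m + 1)) (u m + d m))) := by
          apply ENNReal.ofReal_le_ofReal
          rcases le_total (l (m + 1) + d (m + 1)) (u m + d m) with h | h
          · rw [max_eq_right h]
            have := hd m
            linarith
          · rw [max_eq_left h]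
            have := hov m
            linarith
      _ ≤ ENNReal.ofReal (u m - l 0) +
            ENNReal.ofReal ((u (m + 1) + d (m + 1)) - max (l (m + 1) + d (m + 1)) (u m + d m)) :=
          ENNReal.ofReal_add_le
      _ ≤ volume A + volume P := by
          apply add_le_add ih
          rw [hP, Real.volume_Ioo]
      _ = volume (A ∪ P) := (measure_union hdisj measurableSet_Ioo).symm
      _ ≤ _ := measure_mono hsub2

lemma kp_finite (μ0 : ℝ) (hμ : 0 < μ0) (hμ1 : μ0 ≤ 1) (s : Finset (ℝ × ℝ)) :
    volume (⋃ p ∈ s, Set.Ioo (μ0 * p.1 - p.2) (μ0 * p.1 + p.2)) ≤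
      volume (⋃ p ∈ s, Set.Ioo (p.1 - p.2) (p.1 + p.2)) := by
  classical
  induction s using Finset.strongInduction with
  | _ s ih =>
  by_cases hempty : s = ∅
  · simp [hempty]
  set f : ℝ × ℝ → ℝ := fun p => μ0 * p.1 - p.2 with hf
  set g : ℝ × ℝ → ℝ := fun p => μ0 * p.1 + p.2 with hg
  -- Case 0 : some radius is nonpositive
  by_cases h0 : ∃ p ∈ s, p.2 ≤ 0
  · obtain ⟨p, hp, hp2⟩ := h0
    have hemp : ∀ c : ℝ, Set.Ioo (c - p.2) (c + p.2) = ∅ :=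
      fun c => Set.Ioo_eq_empty (by intro h; linarith)
    have e1 : (⋃ q ∈ s, Set.Ioo (μ0 * q.1 - q.2) (μ0 * q.1 + q.2)) =
        ⋃ q ∈ s.erase p, Set.Ioo (μ0 * q.1 - q.2) (μ0 * q.1 + q.2) := by
      conv_lhs => rw [← Finset.insert_erase hp]
      rw [Finset.set_biUnion_insert, hemp (μ0 * p.1), Set.empty_union]
    have e2 : (⋃ q ∈ s, Set.Ioo (q.1 - q.2) (q.1 + q.2)) =
        ⋃ q ∈ s.erase p, Set.Ioo (q.1 - q.2) (q.1 + q.2) := by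
      conv_lhs => rw [← Finset.insert_erase hp]
      rw [Finset.set_biUnion_insert, hemp p.1, Set.empty_union]
    rw [e1, e2]
    exact ih _ (Finset.erase_ssubset hp)
  push_neg at h0
  -- Case 1 : containment among the contracted intervals
  by_cases hcont : ∃ p ∈ s, ∃ q ∈ s, p ≠ q ∧ f q ≤ f p ∧ g p ≤ g q
  · obtain ⟨p, hp, q, hq, hpq, h1, h2⟩ := hcont
    have hq' : q ∈ s.erase p := Finset.mem_erase.mpr ⟨fun h => hpq h.symm, hq⟩
    have e1 : (⋃ r ∈ s, Set.Ioo (μ0 * r.1 - r.2) (μ0 * r.1 + r.2)) =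
        ⋃ r ∈ s.erase p, Set.Ioo (μ0 * r.1 - r.2) (μ0 * r.1 + r.2) := by
      conv_lhs => rw [← Finset.insert_erase hp]
      rw [Finset.set_biUnion_insert]
      apply Set.union_eq_self_of_subset_left
      exact (Set.Ioo_subset_Ioo h1 h2).trans
        (Set.subset_biUnion_of_mem (u := fun r => Set.Ioo (μ0 * r.1 - r.2) (μ0 * r.1 + r.2)) hq')
    rw [e1]
    refine le_trans (ih _ (Finset.erase_ssubset hp)) (measure_mono ?_)
    exact Set.biUnion_subset_biUnion_left (fun x hx => Finset.mem_of_mem_erase hx)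
  push_neg at hcont
  -- Case 2 : separated partition of the contracted intervals
  by_cases hsep : ∃ A ⊆ s, A.Nonempty ∧ (s \ A).Nonempty ∧
      ∀ p ∈ A, ∀ q ∈ s \ A, g p ≤ f q ∨ g q ≤ f p
  · obtain ⟨A, hAs, hAne, hBne, hsepAB⟩ := hsep
    set B := s \ A with hB
    have hBs : B ⊆ s := Finset.sdiff_subset
    have hdisjG : ∀ p ∈ A, ∀ q ∈ B, Disjoint (Set.Ioo (p.1 - p.2) (p.1 + p.2))
        (Set.Ioo (q.1 - q.2) (q.1 + q.2)) := by
      intro p hpA q hqB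
      have hp0 : 0 < p.2 := h0 p (hAs hpA)
      have hq0 : 0 < q.2 := h0 q (hBs hqB)
      rcases hsepAB p hpA q hqB with h | h
      · have hc : p.1 < q.1 := by
          simp only [hf, hg] at h; nlinarith
        have h2 : p.1 + p.2 ≤ q.1 - q.2 := by
          simp only [hf, hg] at h; nlinarith
        rw [Set.disjoint_left]
        intro x hx1 hx2
        simp only [Set.mem_Ioo] at hx1 hx2
        linarith [hx1.2, hx2.1]
      · have hc : q.1 < p.1 := by
          simp only [hf, hg] at h; nlinarith
        have h2 : q.1 + q.2 ≤ p.1 - p.2 := by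
          simp only [hf, hg] at h; nlinarith
        rw [Set.disjoint_left]
        intro x hx1 hx2
        simp only [Set.mem_Ioo] at hx1 hx2
        linarith [hx1.1, hx2.2]
    have hsplit : ∀ F : ℝ × ℝ → Set ℝ, (⋃ p ∈ s, F p) = (⋃ p ∈ A, F p) ∪ ⋃ p ∈ B, F p := by
      intro F
      rw [← Finset.set_biUnion_union]
      congr 1
      rw [Finset.union_sdiff_of_subset hAs]
    have hAss : A ⊂ s := by
      refine (Finset.ssubset_iff_of_subset hAs).mpr ?_
      obtain ⟨q, hq⟩ := hBne
      exact ⟨q, Finset.mem_sdiff.mp hq |>.1, Finset.mem_sdiff.mp hq |>.2⟩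
    have hBss : B ⊂ s := by
      refine (Finset.ssubset_iff_of_subset hBs).mpr ?_
      obtain ⟨p, hp⟩ := hAne
      exact ⟨p, hAs hp, fun h => (Finset.mem_sdiff.mp h).2 hp⟩
    have hdisjU : Disjoint (⋃ p ∈ A, Set.Ioo (p.1 - p.2) (p.1 + p.2))
        (⋃ q ∈ B, Set.Ioo (q.1 - q.2) (q.1 + q.2)) := by
      simp only [Set.disjoint_iUnion_left, Set.disjoint_iUnion_right]
      intro p hp q hq
      exact hdisjG q hq p hp
    calc volume (⋃ p ∈ s, Set.Ioo (μ0 * p.1 - p.2) (μ0 * p.1 + p.2))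
        = volume ((⋃ p ∈ A, Set.Ioo (μ0 * p.1 - p.2) (μ0 * p.1 + p.2)) ∪
            ⋃ p ∈ B, Set.Ioo (μ0 * p.1 - p.2) (μ0 * p.1 + p.2)) := by rw [hsplit]
      _ ≤ volume (⋃ p ∈ A, Set.Ioo (μ0 * p.1 - p.2) (μ0 * p.1 + p.2)) +
            volume (⋃ p ∈ B, Set.Ioo (μ0 * p.1 - p.2) (μ0 * p.1 + p.2)) := measure_union_le _ _
      _ ≤ volume (⋃ p ∈ A, Set.Ioo (p.1 - p.2) (p.1 + p.2)) +
            volume (⋃ p ∈ B, Set.Ioo (p.1 - p.2) (p.1 + p.2)) :=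
          add_le_add (ih A hAss) (ih B hBss)
      _ = volume ((⋃ p ∈ A, Set.Ioo (p.1 - p.2) (p.1 + p.2)) ∪
            ⋃ p ∈ B, Set.Ioo (p.1 - p.2) (p.1 + p.2)) :=
          (measure_union hdisjU (B.measurableSet_biUnion fun q _ => measurableSet_Ioo)).symm
      _ = volume (⋃ p ∈ s, Set.Ioo (p.1 - p.2) (p.1 + p.2)) := by rw [← hsplit]
  push_neg at hsep
  -- Final case: no small radii, no containment, no separation
  have hsne : s.Nonempty := Finset.nonempty_of_ne_empty hempty
  have hm : 0 < s.card := Finset.card_pos.mpr hsne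
  have hinj : Set.InjOn f s := by
    intro p hp q hq hfe
    by_contra hne2
    have h1 := hcont p hp q hq hne2 (le_of_eq hfe.symm)
    have h2 := hcont q hq p hp (Ne.symm hne2) (le_of_eq hfe)
    linarith
  set m := s.card with hmcard
  set tt := s.image f with htt
  have htc : tt.card = m := Finset.card_image_of_injOn hinj
  set iso := tt.orderIsoOfFin htc with hiso
  have hex : ∀ i : Fin m, ∃! p, p ∈ s ∧ f p = (iso i : ℝ) := by
    intro i
    have hmem : (iso i : ℝ) ∈ tt := (iso i).2
    obtain ⟨p, hp, hfp⟩ := Finset.mem_image.mp hmem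
    exact ⟨p, ⟨hp, hfp⟩, fun q hq => hinj hq.1 hp (hq.2.trans hfp.symm)⟩
  set e : Fin m → ℝ × ℝ := fun i => Finset.choose (fun p => f p = (iso i : ℝ)) s (hex i) with he
  have he_mem : ∀ i, e i ∈ s := fun i => Finset.choose_mem _ _ _
  have hef : ∀ i, f (e i) = (iso i : ℝ) := fun i =>
    Finset.choose_property (fun p => f p = (iso i : ℝ)) s (hex i)
  have hfmono : ∀ {i j : Fin m}, i < j → f (e i) < f (e j) := by
    intro i j hij
    rw [hef, hef]
    exact Subtype.coe_lt_coe.mpr (iso.lt_iff_lt.mpr hij)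
  have hfmono' : ∀ {i j : Fin m}, i ≤ j → f (e i) ≤ f (e j) := by
    intro i j hij
    rcases eq_or_lt_of_le hij with h | h
    · rw [h]
    · exact (hfmono h).le
  have hne : ∀ {i j : Fin m}, i < j → e j ≠ e i := by
    intro i j hij h
    exact absurd (congrArg f h) (ne_of_gt (hfmono hij))
  have hgmono : ∀ {i j : Fin m}, i < j → g (e i) < g (e j) := by
    intro i j hij
    exact hcont (e j) (he_mem j) (e i) (he_mem i) (hne hij) (hfmono hij).le
  have hgmono' : ∀ {i j : Fin m}, i ≤ j → g (e i) ≤ g (e j) := by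
    intro i j hij
    rcases eq_or_lt_of_le hij with h | h
    · rw [h]
    · exact (hgmono h).le
  have hc1mono : ∀ {i j : Fin m}, i ≤ j → (e i).1 ≤ (e j).1 := by
    intro i j hij
    rcases eq_or_lt_of_le hij with h | h
    · rw [h]
    · have h1 := hfmono h
      have h2 := hgmono h
      simp only [hf, hg] at h1 h2
      nlinarith
  have hsurj : ∀ p ∈ s, ∃ i, e i = p := by
    intro p hp
    obtain ⟨i, hi⟩ := iso.surjective ⟨f p, Finset.mem_image_of_mem f hp⟩
    exact ⟨i, hinj (he_mem i) hp (by rw [hef, hi])⟩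
  have hovk : ∀ (i : ℕ) (h1 : i + 1 < m), f (e ⟨i + 1, h1⟩) < g (e ⟨i, Nat.lt_of_succ_lt h1⟩) := by
    intro i h1
    by_contra hge
    push_neg at hge
    set i0 : Fin m := ⟨i, Nat.lt_of_succ_lt h1⟩ with hi0
    set i1 : Fin m := ⟨i + 1, h1⟩ with hi1
    set A := (Finset.univ.filter (fun j : Fin m => j ≤ i0)).image e with hA
    have hAs : A ⊆ s := by
      intro p hp
      obtain ⟨j, _, rfl⟩ := Finset.mem_image.mp hp
      exact he_mem j
    have hAne : A.Nonempty := ⟨e i0, Finset.mem_image_of_mem e (by simp)⟩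
    have hBne' : e i1 ∈ s \ A := by
      rw [Finset.mem_sdiff]
      refine ⟨he_mem _, fun hmem => ?_⟩
      obtain ⟨j, hj, hje⟩ := Finset.mem_image.mp hmem
      have hjle : j ≤ i0 := (Finset.mem_filter.mp hj).2
      have hlt : j < i1 := lt_of_le_of_lt hjle (by rw [hi0, hi1]; exact Fin.mk_lt_mk.mpr (Nat.lt_succ_self i))
      exact hne hlt hje.symm
    obtain ⟨p, hpA, q, hqB, hlt1, _⟩ := hsep A hAs hAne ⟨_, hBne'⟩
    obtain ⟨jp, hjp, rfl⟩ := Finset.mem_image.mp hpA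
    have hjple : jp ≤ i0 := (Finset.mem_filter.mp hjp).2
    obtain ⟨jq, rfl⟩ := hsurj q (Finset.mem_sdiff.mp hqB).1
    have hjq : ¬jq ≤ i0 := by
      intro hle
      exact (Finset.mem_sdiff.mp hqB).2
        (Finset.mem_image_of_mem e (Finset.mem_filter.mpr ⟨Finset.mem_univ _, hle⟩))
    have hjq' : i1 ≤ jq := by
      have hv : (i0 : Fin m) < jq := not_le.mp hjq
      rw [hi1]
      rw [hi0] at hv
      exact Fin.mk_le_mk.mpr (Nat.succ_le_of_lt (Fin.mk_lt_mk.mp (by exact_mod_cast hv)))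
    have hg1 := hgmono' hjple
    have hf1 := hfmono' hjq'
    linarith
  set mm := m - 1 with hmm
  have hmm1 : mm + 1 = m := Nat.succ_pred_eq_of_pos hm
  set E : ℕ → ℝ × ℝ := fun i => e ⟨min i mm, by omega⟩ with hE
  have hidxle : ∀ i : ℕ, (⟨min i mm, by omega⟩ : Fin m) ≤ ⟨min (i + 1) mm, by omega⟩ := by
    intro i
    exact Fin.mk_le_mk.mpr (by omega)
  have hchain := kp_chain (fun i => f (E i)) (fun i => g (E i)) (fun i => (1 - μ0) * (E i).1)
    (fun i => mul_le_mul_of_nonneg_left (hc1mono (hidxle i)) (by linarith))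
    (fun i => hgmono' (hidxle i))
    (fun i => by
      have := h0 (E i) (he_mem _)
      simp only [hf, hg]
      linarith)
    (fun i => by
      by_cases hi : i + 1 ≤ mm
      · have h1 : (⟨min (i + 1) mm, by omega⟩ : Fin m) = ⟨i + 1, by omega⟩ :=
          Fin.ext (by simp; omega)
        have h2 : (⟨min i mm, by omega⟩ : Fin m) = ⟨i, by omega⟩ :=
          Fin.ext (by simp; omega)
        simp only [hE]
        rw [h1, h2]
        exact (hovk i (by omega)).le
      · have h1 : (⟨min (i + 1) mm, by omega⟩ : Fin m) = ⟨min i mm, by omega⟩ :=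
          Fin.ext (by simp; omega)
        simp only [hE]
        rw [h1]
        have := h0 (e (⟨min i mm, by omega⟩ : Fin m)) (he_mem _)
        simp only [hf, hg]
        linarith)
    mm
  have hend : ∀ i : ℕ, f (E i) + (1 - μ0) * (E i).1 = (E i).1 - (E i).2 ∧
      g (E i) + (1 - μ0) * (E i).1 = (E i).1 + (E i).2 := by
    intro i
    constructor <;> simp only [hf, hg] <;> ring
  have hUeq : (⋃ i ∈ Finset.range (mm + 1),
        Set.Ioo (f (E i) + (1 - μ0) * (E i).1) (g (E i) + (1 - μ0) * (E i).1)) =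
      ⋃ p ∈ s, Set.Ioo (p.1 - p.2) (p.1 + p.2) := by
    ext x
    simp only [Set.mem_iUnion, Finset.mem_range, exists_prop]
    constructor
    · rintro ⟨i, hi, hx⟩
      rw [(hend i).1, (hend i).2] at hx
      exact ⟨E i, he_mem _, hx⟩
    · rintro ⟨p, hp, hx⟩
      obtain ⟨j, rfl⟩ := hsurj p hp
      refine ⟨(j : ℕ), by omega, ?_⟩
      have hEj : E (j : ℕ) = e j := by
        simp only [hE]
        congr 1
        exact Fin.ext (by simp; omega)
      rw [(hend (j : ℕ)).1, (hend (j : ℕ)).2, hEj]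
      exact hx
  have hVsub : (⋃ p ∈ s, Set.Ioo (μ0 * p.1 - p.2) (μ0 * p.1 + p.2)) ⊆
      Set.Ioo (f (E 0)) (g (E mm)) := by
    intro x hx
    simp only [Set.mem_iUnion, exists_prop] at hx
    obtain ⟨p, hp, hx⟩ := hx
    obtain ⟨j, rfl⟩ := hsurj p hp
    have h1 : f (E 0) ≤ f (e j) := by
      refine hfmono' (i := ⟨min 0 mm, by omega⟩) ?_
      exact Fin.mk_le_mk.mpr (by omega)
    have h2 : g (e j) ≤ g (E mm) := by
      refine hgmono' (j := ⟨min mm mm, by omega⟩) ?_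
      exact Fin.mk_le_mk.mpr (by omega)
    have hx' : f (e j) < x ∧ x < g (e j) := by
      simpa only [hf, hg, Set.mem_Ioo] using hx
    exact Set.mem_Ioo.mpr ⟨lt_of_le_of_lt h1 hx'.1, lt_of_lt_of_le hx'.2 h2⟩
  calc volume (⋃ p ∈ s, Set.Ioo (μ0 * p.1 - p.2) (μ0 * p.1 + p.2))
      ≤ volume (Set.Ioo (f (E 0)) (g (E mm))) := measure_mono hVsub
    _ = ENNReal.ofReal (g (E mm) - f (E 0)) := Real.volume_Ioo
    _ ≤ _ := le_trans hchain (le_of_eq (by rw [hUeq]))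

lemma kp_main {ι : Type*} (μ0 : ℝ) (hμ : 0 < μ0) (hμ1 : μ0 ≤ 1) (c r : ι → ℝ) :
    volume (⋃ α, Set.Ioo (μ0 * c α - r α) (μ0 * c α + r α)) ≤
      volume (⋃ α, Set.Ioo (c α - r α) (c α + r α)) := by
  classical
  obtain ⟨T, hTc, hTu⟩ := TopologicalSpace.isOpen_iUnion_countable
    (fun α => Set.Ioo (μ0 * c α - r α) (μ0 * c α + r α)) (fun α => isOpen_Ioo)
  rw [← hTu]
  rcases T.eq_empty_or_nonempty with hT | hT
  · simp [hT]
  obtain ⟨gg, hgg⟩ := Set.Countable.exists_eq_range hTc hT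
  have hrw : (⋃ α ∈ T, Set.Ioo (μ0 * c α - r α) (μ0 * c α + r α)) =
      ⋃ n : ℕ, ⋃ i ∈ Finset.range (n + 1), Set.Ioo (μ0 * c (gg i) - r (gg i)) (μ0 * c (gg i) + r (gg i)) := by
    rw [hgg]
    ext x
    simp only [Set.mem_iUnion, Set.mem_range, exists_prop, Finset.mem_range]
    constructor
    · rintro ⟨α, ⟨i, rfl⟩, hx⟩
      exact ⟨i, i, Nat.lt_succ_self i, hx⟩
    · rintro ⟨n, i, _, hx⟩
      exact ⟨gg i, ⟨i, rfl⟩, hx⟩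
  rw [hrw]
  have hmono : Monotone (fun n : ℕ => ⋃ i ∈ Finset.range (n + 1),
      Set.Ioo (μ0 * c (gg i) - r (gg i)) (μ0 * c (gg i) + r (gg i))) := by
    intro n1 n2 h
    refine Set.iUnion₂_subset fun i hi => ?_
    have hi2 : i ∈ Finset.range (n2 + 1) :=
      Finset.mem_range.mpr (by have := Finset.mem_range.mp hi; omega)
    intro x hx
    exact Set.mem_biUnion hi2 hx
  rw [hmono.measure_iUnion]
  refine iSup_le fun n => ?_
  set sn : Finset (ℝ × ℝ) := (Finset.range (n + 1)).image (fun i => (c (gg i), r (gg i))) with hsn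
  have h1 : (⋃ i ∈ Finset.range (n + 1),
      Set.Ioo (μ0 * c (gg i) - r (gg i)) (μ0 * c (gg i) + r (gg i))) =
      ⋃ p ∈ sn, Set.Ioo (μ0 * p.1 - p.2) (μ0 * p.1 + p.2) := by
    ext x
    simp only [Set.mem_iUnion, exists_prop, hsn, Finset.mem_image, Finset.mem_range]
    constructor
    · rintro ⟨i, hi, hx⟩
      exact ⟨(c (gg i), r (gg i)), ⟨i, hi, rfl⟩, hx⟩
    · rintro ⟨p, ⟨i, hi, rfl⟩, hx⟩
      exact ⟨i, hi, hx⟩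
  have h2 : (⋃ p ∈ sn, Set.Ioo (p.1 - p.2) (p.1 + p.2)) ⊆
      ⋃ α, Set.Ioo (c α - r α) (c α + r α) := by
    intro x hx
    simp only [Set.mem_iUnion, exists_prop, hsn, Finset.mem_image, Finset.mem_range] at hx ⊢
    obtain ⟨p, ⟨i, _, rfl⟩, hx⟩ := hx
    exact ⟨gg i, hx⟩
  rw [h1]
  exact le_trans (kp_finite μ0 hμ hμ1 sn) (measure_mono h2)

def mergeAt {n : ℕ} (j : Fin n) (w : {i : Fin n // i ≠ j} → ℝ) (u : ℝ) :
    EuclideanSpace ℝ (Fin n) := WithLp.toLp 2 (fun i => if h : i ≠ j then w ⟨i, h⟩ else u)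

instance uniqNe {n : ℕ} (j : Fin n) : Unique {i : Fin n // ¬i ≠ j} :=
  ⟨⟨⟨j, by simp⟩⟩, fun a => Subtype.ext (not_not.mp a.2)⟩

lemma slice_formula {n : ℕ} (j : Fin n) (A : Set (EuclideanSpace ℝ (Fin n)))
    (hA : MeasurableSet A) :
    volume A = ∫⁻ w : {i : Fin n // i ≠ j} → ℝ, volume {u : ℝ | mergeAt j w u ∈ A} := by
  classical
  set ψ := (MeasurableEquiv.toLp 2 (Fin n → ℝ)) with hψ
  have hψp := (EuclideanSpace.volume_preserving_symm_measurableEquiv_toLp (Fin n)).symm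
  have h1 : volume A = volume (ψ ⁻¹' A) :=
    (hψp.measure_preimage hA.nullMeasurableSet).symm
  set P := (MeasurableEquiv.piEquivPiSubtypeProd (fun _ : Fin n => ℝ) (fun i => i ≠ j)).symm
    with hP
  have hPp := (volume_preserving_piEquivPiSubtypeProd (fun _ : Fin n => ℝ) (fun i => i ≠ j)).symm
  have hmeas1 : MeasurableSet (ψ ⁻¹' A) := ψ.measurable hA
  have h2 : volume (ψ ⁻¹' A) = volume (P ⁻¹' (ψ ⁻¹' A)) :=
    (hPp.measure_preimage hmeas1.nullMeasurableSet).symm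
  have hmeas2 : MeasurableSet (P ⁻¹' (ψ ⁻¹' A)) := P.measurable hmeas1
  rw [h1, h2, Measure.volume_eq_prod, Measure.prod_apply hmeas2]
  refine lintegral_congr fun w => ?_
  have hFp := (volume_preserving_funUnique {i : Fin n // ¬i ≠ j} ℝ).symm
  have hmeas3 : MeasurableSet (Prod.mk w ⁻¹' (P ⁻¹' (ψ ⁻¹' A))) :=
    measurable_prodMk_left hmeas2
  have h6 : (⇑(MeasurableEquiv.funUnique {i : Fin n // ¬i ≠ j} ℝ).symm ⁻¹'
      (Prod.mk w ⁻¹' (⇑P ⁻¹' (⇑ψ ⁻¹' A)))) = {u : ℝ | mergeAt j w u ∈ A} := by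
    ext u
    exact Iff.rfl
  have h5 := hFp.measure_preimage hmeas3.nullMeasurableSet
  rw [h6] at h5
  rw [h5]
  congr!

def scaleCoord {n : ℕ} (j : Fin n) (μ0 : ℝ) (x : EuclideanSpace ℝ (Fin n)) :
    EuclideanSpace ℝ (Fin n) := WithLp.toLp 2 (fun i => if i = j then μ0 * x i else x i)

lemma single_coord {n : ℕ} (j : Fin n) (μ0 : ℝ) (hμ : 0 < μ0) (hμ1 : μ0 ≤ 1)
    (X : Set (EuclideanSpace ℝ (Fin n))) (t : ℝ) (ht : 0 < t) :
    volume (Metric.thickening t (scaleCoord j μ0 '' X)) ≤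
      volume (Metric.thickening t X) := by
  classical
  set S : EuclideanSpace ℝ (Fin n) → EuclideanSpace ℝ (Fin n) := scaleCoord j μ0 with hS
  have hsf1 := slice_formula j (Metric.thickening t (S '' X)) isOpen_thickening.measurableSet
  have hsf2 := slice_formula j (Metric.thickening t X) isOpen_thickening.measurableSet
  refine le_trans (le_of_eq hsf1) (le_trans ?_ (le_of_eq hsf2.symm))
  refine lintegral_mono fun w => ?_
  set Q : EuclideanSpace ℝ (Fin n) → ℝ :=
    fun y => ∑ i ∈ Finset.univ.erase j, (mergeAt j w 0 i - y i) ^ 2 with hQ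
  have hQconst : ∀ u y, ∑ i ∈ Finset.univ.erase j, (mergeAt j w u i - y i) ^ 2 = Q y := by
    intro u y
    refine Finset.sum_congr rfl fun i hi => ?_
    have hij : i ≠ j := Finset.ne_of_mem_erase hi
    simp only [mergeAt, dif_pos hij]
  have hdist : ∀ (u : ℝ) y, dist (mergeAt j w u) y ^ 2 = (u - y j) ^ 2 + Q y := by
    intro u y
    rw [EuclideanSpace.dist_eq, Real.sq_sqrt (by positivity)]
    rw [← Finset.add_sum_erase _ _ (Finset.mem_univ j)]
    congr 1
    · rw [Real.dist_eq, sq_abs]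
      congr 1
      simp [mergeAt]
    · rw [← hQconst u y]
      refine Finset.sum_congr rfl fun i hi => ?_
      rw [Real.dist_eq, sq_abs]
  have key : ∀ (u : ℝ) y, dist (mergeAt j w u) y < t ↔
      u ∈ Set.Ioo (y j - Real.sqrt (t ^ 2 - Q y)) (y j + Real.sqrt (t ^ 2 - Q y)) := by
    intro u y
    have h1 : dist (mergeAt j w u) y < t ↔ dist (mergeAt j w u) y ^ 2 < t ^ 2 := by
      constructor
      · intro h
        exact pow_lt_pow_left₀ h dist_nonneg (by norm_num)
      · intro h
        by_contra hge
        push_neg at hge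
        exact absurd h (not_lt.mpr (pow_le_pow_left₀ ht.le hge 2))
    rw [h1, hdist]
    constructor
    · intro h
      have h2 : |u - y j| < Real.sqrt (t ^ 2 - Q y) := by
        rw [Real.lt_sqrt (abs_nonneg _), sq_abs]
        linarith
      obtain ⟨h3, h4⟩ := abs_lt.mp h2
      exact Set.mem_Ioo.mpr ⟨by linarith, by linarith⟩
    · intro h
      obtain ⟨h3, h4⟩ := Set.mem_Ioo.mp h
      have h2 : |u - y j| < Real.sqrt (t ^ 2 - Q y) := abs_lt.mpr ⟨by linarith, by linarith⟩
      rw [Real.lt_sqrt (abs_nonneg _), sq_abs] at h2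
      linarith
  have hQS : ∀ y, Q (S y) = Q y := by
    intro y
    refine Finset.sum_congr rfl fun i hi => ?_
    have hij : i ≠ j := Finset.ne_of_mem_erase hi
    simp only [hS, scaleCoord, if_neg hij]
  have hSj : ∀ y : EuclideanSpace ℝ (Fin n), (S y) j = μ0 * y j := fun y => by
    simp [hS, scaleCoord]
  have e1 : {u : ℝ | mergeAt j w u ∈ Metric.thickening t X} =
      ⋃ y : X, Set.Ioo ((y : EuclideanSpace ℝ (Fin n)) j - Real.sqrt (t ^ 2 - Q y))
        ((y : EuclideanSpace ℝ (Fin n)) j + Real.sqrt (t ^ 2 - Q y)) := by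
    ext u
    simp only [Set.mem_setOf_eq, mem_thickening_iff, Set.mem_iUnion]
    constructor
    · rintro ⟨z, hz, hd⟩
      exact ⟨⟨z, hz⟩, (key u z).mp hd⟩
    · rintro ⟨⟨z, hz⟩, hu⟩
      exact ⟨z, hz, (key u z).mpr hu⟩
  have e2 : {u : ℝ | mergeAt j w u ∈ Metric.thickening t (S '' X)} =
      ⋃ y : X, Set.Ioo (μ0 * (y : EuclideanSpace ℝ (Fin n)) j - Real.sqrt (t ^ 2 - Q y))
        (μ0 * (y : EuclideanSpace ℝ (Fin n)) j + Real.sqrt (t ^ 2 - Q y)) := by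
    ext u
    simp only [Set.mem_setOf_eq, mem_thickening_iff, Set.mem_iUnion, Set.mem_image]
    constructor
    · rintro ⟨z, ⟨y, hy, rfl⟩, hd⟩
      have h3 := (key u (S y)).mp hd
      rw [hQS, hSj] at h3
      exact ⟨⟨y, hy⟩, h3⟩
    · rintro ⟨⟨y, hy⟩, hu⟩
      refine ⟨S y, ⟨y, hy, rfl⟩, (key u (S y)).mpr ?_⟩
      rw [hQS, hSj]
      exact hu
  rw [e1, e2]
  exact kp_main μ0 hμ hμ1 (fun y : X => (y : EuclideanSpace ℝ (Fin n)) j)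
    (fun y : X => Real.sqrt (t ^ 2 - Q y))

def diagMap {n : ℕ} (c : Fin n → ℝ) (x : EuclideanSpace ℝ (Fin n)) :
    EuclideanSpace ℝ (Fin n) := WithLp.toLp 2 (fun i => c i * x i)

def partialScale {n : ℕ} (c : Fin n → ℝ) (T : Finset (Fin n)) (x : EuclideanSpace ℝ (Fin n)) :
    EuclideanSpace ℝ (Fin n) := WithLp.toLp 2 (fun i => if i ∈ T then c i * x i else x i)

lemma multi_contract {n : ℕ} (c : Fin n → ℝ) (hc : ∀ i, 0 < c i) (hc1 : ∀ i, c i ≤ 1)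
    (X : Set (EuclideanSpace ℝ (Fin n))) (t : ℝ) (ht : 0 < t) :
    volume (Metric.thickening t (diagMap c '' X)) ≤ volume (Metric.thickening t X) := by
  classical
  suffices h : ∀ (T : Finset (Fin n)) (Y : Set (EuclideanSpace ℝ (Fin n))),
      volume (Metric.thickening t (partialScale c T '' Y)) ≤ volume (Metric.thickening t Y) by
    have h2 := h Finset.univ X
    have h3 : partialScale c Finset.univ = diagMap c := by
      funext x; ext i
      simp [partialScale, diagMap]
    rwa [h3] at h2
  intro T
  induction T using Finset.induction_on with
  | empty =>
    intro Y
    have h3 : partialScale c (∅ : Finset (Fin n)) = fun x => x := by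
      funext x; ext i
      simp [partialScale]
    rw [h3, Set.image_id']
  | @insert j T hj ih =>
    intro Y
    have h3 : partialScale c (insert j T) = scaleCoord j (c j) ∘ partialScale c T := by
      funext x; ext i
      simp only [Function.comp_apply, scaleCoord, partialScale]
      by_cases hij : i = j
      · subst hij
        simp [hj]
      · simp [hij, Finset.mem_insert]
    rw [h3, Set.image_comp]
    exact le_trans (single_coord j (c j) (hc j) (hc1 j) _ t ht) (ih Y)

lemma expand_subset {n : ℕ} (b : Fin n → ℝ) (δ : ℝ) (hδ : 0 < δ) (hb : ∀ i, δ ≤ b i)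
    (Y : Set (EuclideanSpace ℝ (Fin n))) (t : ℝ) :
    Metric.thickening t (diagMap b '' Y) ⊆ diagMap b '' Metric.thickening (t / δ) Y := by
  intro z hz
  rw [mem_thickening_iff] at hz
  obtain ⟨zz, ⟨y, hy, rfl⟩, hd⟩ := hz
  have hbpos : ∀ i, 0 < b i := fun i => lt_of_lt_of_le hδ (hb i)
  set x : EuclideanSpace ℝ (Fin n) := WithLp.toLp 2 (fun i => z i / b i) with hx
  refine ⟨x, mem_thickening_iff.mpr ⟨y, hy, ?_⟩, ?_⟩
  · have h1 : dist x y = Real.sqrt (∑ i, dist (x i) (y i) ^ 2) := EuclideanSpace.dist_eq x y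
    have h2 : dist z (diagMap b y) = Real.sqrt (∑ i, dist (z i) (diagMap b y i) ^ 2) :=
      EuclideanSpace.dist_eq z (diagMap b y)
    have hterm : ∀ i, dist (x i) (y i) ^ 2 ≤ dist (z i) (diagMap b y i) ^ 2 / δ ^ 2 := by
      intro i
      have hbi := hbpos i
      have e1 : x i - y i = (z i - b i * y i) / b i := by
        rw [hx]
        field_simp
      rw [Real.dist_eq, Real.dist_eq, sq_abs, sq_abs, e1, div_pow,
        show diagMap b y i = b i * y i from rfl]
      rw [div_le_div_iff₀ (by positivity) (by positivity)]
      have h3 : δ ^ 2 ≤ b i ^ 2 := by nlinarith [hb i]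
      nlinarith [sq_nonneg (z i - b i * y i)]
    have hsum : (∑ i, dist (x i) (y i) ^ 2) ≤ (∑ i, dist (z i) (diagMap b y i) ^ 2) / δ ^ 2 := by
      rw [Finset.sum_div]
      exact Finset.sum_le_sum fun i _ => hterm i
    have h4 : dist x y ≤ dist z (diagMap b y) / δ := by
      rw [h1, h2]
      refine le_trans (Real.sqrt_le_sqrt hsum) (le_of_eq ?_)
      rw [Real.sqrt_div (by positivity), Real.sqrt_sq hδ.le]
    calc dist x y ≤ dist z (diagMap b y) / δ := h4
      _ < t / δ := by gcongr
  · ext i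
    show b i * x i = z i
    rw [hx]
    show b i * (z i / b i) = z i
    rw [mul_comm]
    exact div_mul_cancel₀ (z i) (hbpos i).ne'

lemma diag_vol {n : ℕ} (b : Fin n → ℝ) (hb : ∀ i, 0 < b i)
    (W : Set (EuclideanSpace ℝ (Fin n))) :
    volume (diagMap b '' W) = ENNReal.ofReal (∏ i, b i) * volume W := by
  classical
  let f : EuclideanSpace ℝ (Fin n) →ₗ[ℝ] EuclideanSpace ℝ (Fin n) :=
    { toFun := diagMap b
      map_add' := fun x y => by
        ext i
        simp [diagMap, mul_add]
      map_smul' := fun r x => by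
        ext i
        simp [diagMap]
        ring }
  have hdet : LinearMap.det f = ∏ i, b i := by
    have h1 : LinearMap.toMatrix (EuclideanSpace.basisFun (Fin n) ℝ).toBasis
        (EuclideanSpace.basisFun (Fin n) ℝ).toBasis f = Matrix.diagonal b := by
      ext i k
      rw [LinearMap.toMatrix_apply]
      rw [OrthonormalBasis.coe_toBasis_repr_apply, EuclideanSpace.basisFun_repr,
        OrthonormalBasis.coe_toBasis, EuclideanSpace.basisFun_apply]
      show b i * (EuclideanSpace.single k (1 : ℝ)) i = _
      rw [EuclideanSpace.single_apply]
      by_cases hik : i = k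
      · subst hik
        simp [Matrix.diagonal]
      · simp [Matrix.diagonal, hik]
    rw [← LinearMap.det_toMatrix (EuclideanSpace.basisFun (Fin n) ℝ).toBasis f, h1,
      Matrix.det_diagonal]
  have himg : diagMap b '' W = f '' W := rfl
  rw [himg, Measure.addHaar_image_linearMap volume f W, hdet,
    abs_of_pos (Finset.prod_pos fun i _ => hb i)]

end Aux

/-- Upper bound for the lower Minkowski content under a diagonal linear map with
nondecreasing positive diagonal entries: `M_k(L(X)) ≤ a_{n-k+1} ⋯ a_n · M_k(X)`. -/
theorem diag_map_upper_bound (n k : ℕ) (hn : 1 ≤ n) (hkn : k ≤ n)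
    (a : Fin n → ℝ) (hpos : ∀ i, 0 < a i) (hmono : Monotone a)
    (L : EuclideanSpace ℝ (Fin n) → EuclideanSpace ℝ (Fin n))
    (hL : L = fun x : EuclideanSpace ℝ (Fin n) => WithLp.toLp 2 (fun i : Fin n => a i * x i))
    (X : Set (EuclideanSpace ℝ (Fin n))) :
    lowerMinkowskiContent n k (L '' X) ≤
      ENNReal.ofReal (∏ i ∈ Finset.univ.filter (fun i : Fin n => n - k ≤ (i : ℕ)), a i) *
        lowerMinkowskiContent n k X := by
  classical
  set N := n - k with hN
  have hNn : N ≤ n := Nat.sub_le n k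
  have hpm : min N (n - 1) < n := by omega
  set p : Fin n := ⟨min N (n - 1), hpm⟩ with hp
  set ap := a p with hap
  have hap0 : 0 < ap := hpos p
  set b : Fin n → ℝ := fun i => max (a i) ap with hb
  set cc : Fin n → ℝ := fun i => min (a i) ap / ap with hcc
  have hcc0 : ∀ i, 0 < cc i := fun i => div_pos (lt_min (hpos i) hap0) hap0
  have hcc1 : ∀ i, cc i ≤ 1 := fun i => by
    rw [hcc, div_le_one hap0]
    exact min_le_right _ _
  have hbap : ∀ i, ap ≤ b i := fun i => le_max_right _ _
  have hbpos : ∀ i, 0 < b i := fun i => lt_of_lt_of_le hap0 (hbap i)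
  have hfact : L = diagMap b ∘ diagMap cc := by
    rw [hL]
    funext x
    ext i
    show a i * x i = b i * (cc i * x i)
    rw [← mul_assoc]
    congr 1
    show a i = (max (a i) ap) * (min (a i) ap / ap)
    rcases le_total (a i) ap with h | h
    · rw [max_eq_right h, min_eq_left h, mul_comm, div_mul_cancel₀ _ hap0.ne']
    · rw [max_eq_left h, min_eq_right h, div_self hap0.ne', mul_one]
  have hvol : ∀ t : ℝ, t ∈ Set.Ioi (0 : ℝ) →
      volume (Metric.thickening t (L '' X)) ≤
        ENNReal.ofReal (∏ i, b i) * volume (Metric.thickening (t / ap) X) := by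
    intro t ht
    rw [hfact, Set.image_comp]
    calc volume (Metric.thickening t (diagMap b '' (diagMap cc '' X)))
        ≤ volume (diagMap b '' Metric.thickening (t / ap) (diagMap cc '' X)) :=
          measure_mono (expand_subset b ap hap0 hbap _ t)
      _ = ENNReal.ofReal (∏ i, b i) * volume (Metric.thickening (t / ap) (diagMap cc '' X)) :=
          diag_vol b hbpos _
      _ ≤ ENNReal.ofReal (∏ i, b i) * volume (Metric.thickening (t / ap) X) :=
          mul_le_mul_right (multi_contract cc hcc0 hcc1 X _ (div_pos ht hap0)) _
  -- arithmetic about the products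
  set P : ℝ := ∏ i ∈ Finset.univ.filter (fun i : Fin n => N ≤ (i : ℕ)), a i with hP
  have hPpos : 0 < P := Finset.prod_pos fun i _ => hpos i
  have hcard : (Finset.univ.filter fun i : Fin n => ¬N ≤ (i : ℕ)).card = N := by
    have h1 : (Finset.univ.filter fun i : Fin n => ¬N ≤ (i : ℕ)) =
        (Finset.range N).attachFin (fun m hm => lt_of_lt_of_le (Finset.mem_range.mp hm) hNn) := by
      ext i
      simp only [Finset.mem_filter, Finset.mem_univ, true_and, Finset.mem_attachFin,
        Finset.mem_range, not_le]
    rw [h1, Finset.card_attachFin, Finset.card_range]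
  have hprod : (∏ i, b i) = P * ap ^ N := by
    rw [← Finset.prod_filter_mul_prod_filter_not Finset.univ (fun i : Fin n => N ≤ (i : ℕ)) b]
    congr 1
    · rw [hP]
      refine Finset.prod_congr rfl fun i hi => ?_
      have hNi : N ≤ (i : ℕ) := (Finset.mem_filter.mp hi).2
      have hip : p ≤ i := by
        rw [hp]
        refine Fin.mk_le_mk.mpr ?_
        have := i.isLt
        omega
      rw [hb]
      exact max_eq_left (hmono hip)
    · have h2 : ∀ i ∈ Finset.univ.filter (fun i : Fin n => ¬N ≤ (i : ℕ)), b i = ap := by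
        intro i hi
        have hNi : (i : ℕ) < N := not_le.mp (Finset.mem_filter.mp hi).2
        have hip : i ≤ p := by
          rw [hp]
          refine Fin.mk_le_mk.mpr ?_
          have := i.isLt
          omega
        rw [hb]
        exact max_eq_right (hmono hip)
      rw [Finset.prod_congr rfl h2, Finset.prod_const, hcard]
  -- positivity of the unit ball volume
  have hv : 0 < unitBallVol N := by
    rw [unitBallVol]
    refine ENNReal.toReal_pos ?_ ?_
    · exact (measure_ball_pos _ _ one_pos).ne'
    · exact measure_ball_lt_top.ne
  -- pointwise comparison of the liminf integrands
  set g : ℝ → ENNReal :=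
    fun s => volume (Metric.thickening s X) / ENNReal.ofReal (unitBallVol N * s ^ N) with hg
  have hpt : ∀ t ∈ Set.Ioi (0 : ℝ),
      volume (Metric.thickening t (L '' X)) / ENNReal.ofReal (unitBallVol N * t ^ N) ≤
        ENNReal.ofReal P * g (t / ap) := by
    intro t ht
    have ht0 : (0 : ℝ) < t := ht
    have hD1ne0 : ENNReal.ofReal (ap ^ N) ≠ 0 :=
      (ENNReal.ofReal_pos.mpr (by positivity)).ne'
    have hD1netop : ENNReal.ofReal (ap ^ N) ≠ ⊤ := ENNReal.ofReal_ne_top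
    have hden : ENNReal.ofReal (unitBallVol N * t ^ N) =
        ENNReal.ofReal (ap ^ N) * ENNReal.ofReal (unitBallVol N * (t / ap) ^ N) := by
      rw [← ENNReal.ofReal_mul (by positivity)]
      congr 1
      rw [div_pow]
      field_simp
    have hA : ENNReal.ofReal (∏ i, b i) = ENNReal.ofReal P * ENNReal.ofReal (ap ^ N) := by
      rw [hprod, ENNReal.ofReal_mul hPpos.le]
    calc volume (Metric.thickening t (L '' X)) / ENNReal.ofReal (unitBallVol N * t ^ N)
        ≤ (ENNReal.ofReal (∏ i, b i) * volume (Metric.thickening (t / ap) X)) /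
            ENNReal.ofReal (unitBallVol N * t ^ N) :=
          ENNReal.div_le_div_right (hvol t ht) _
      _ = ENNReal.ofReal P * g (t / ap) := by
          rw [hA, hden, hg]
          rw [div_eq_mul_inv, div_eq_mul_inv,
            ENNReal.mul_inv (Or.inl hD1ne0) (Or.inl hD1netop)]
          calc ENNReal.ofReal P * ENNReal.ofReal (ap ^ N) * volume (Metric.thickening (t / ap) X) *
                ((ENNReal.ofReal (ap ^ N))⁻¹ * (ENNReal.ofReal (unitBallVol N * (t / ap) ^ N))⁻¹)
              = ENNReal.ofReal P * (volume (Metric.thickening (t / ap) X) *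
                  (ENNReal.ofReal (unitBallVol N * (t / ap) ^ N))⁻¹) *
                  (ENNReal.ofReal (ap ^ N) * (ENNReal.ofReal (ap ^ N))⁻¹) := by ring
            _ = ENNReal.ofReal P * (volume (Metric.thickening (t / ap) X) *
                  (ENNReal.ofReal (unitBallVol N * (t / ap) ^ N))⁻¹) := by
                rw [ENNReal.mul_inv_cancel hD1ne0 hD1netop, mul_one]
  -- filter manipulation
  have htend1 : Tendsto (fun t : ℝ => t / ap) (nhdsWithin 0 (Set.Ioi 0))
      (nhdsWithin 0 (Set.Ioi 0)) := by
    rw [nhdsWithin]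
    refine tendsto_inf.mpr ⟨?_, ?_⟩
    · have h1 : Tendsto (fun t : ℝ => t / ap) (nhds 0) (nhds (0 / ap)) :=
        tendsto_id.div_const ap
      rw [zero_div] at h1
      exact h1.mono_left nhdsWithin_le_nhds
    · rw [tendsto_principal]
      exact eventually_mem_nhdsWithin.mono fun x hx => div_pos hx hap0
  have htend2 : Tendsto (fun t : ℝ => t * ap) (nhdsWithin 0 (Set.Ioi 0))
      (nhdsWithin 0 (Set.Ioi 0)) := by
    rw [nhdsWithin]
    refine tendsto_inf.mpr ⟨?_, ?_⟩
    · have h1 : Tendsto (fun t : ℝ => t * ap) (nhds 0) (nhds (0 * ap)) :=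
        tendsto_id.mul_const ap
      rw [zero_mul] at h1
      exact h1.mono_left nhdsWithin_le_nhds
    · rw [tendsto_principal]
      exact eventually_mem_nhdsWithin.mono fun x hx => mul_pos hx hap0
  have hmap : Filter.map (fun t : ℝ => t / ap) (nhdsWithin 0 (Set.Ioi 0)) =
      nhdsWithin 0 (Set.Ioi 0) := by
    refine le_antisymm htend1 ?_
    have hcomp : (fun t : ℝ => t / ap) ∘ (fun t : ℝ => t * ap) = id :=
      funext fun t => mul_div_cancel_right₀ t hap0.ne'
    calc nhdsWithin (0 : ℝ) (Set.Ioi 0) = Filter.map id (nhdsWithin 0 (Set.Ioi 0)) :=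
          Filter.map_id.symm
      _ = Filter.map ((fun t : ℝ => t / ap) ∘ (fun t : ℝ => t * ap))
            (nhdsWithin 0 (Set.Ioi 0)) := by rw [hcomp]
      _ = Filter.map (fun t : ℝ => t / ap)
            (Filter.map (fun t : ℝ => t * ap) (nhdsWithin 0 (Set.Ioi 0))) :=
          (Filter.map_map).symm
      _ ≤ Filter.map (fun t : ℝ => t / ap) (nhdsWithin 0 (Set.Ioi 0)) :=
          Filter.map_mono htend2
  have hconst : Filter.liminf (fun s => ENNReal.ofReal P * g s) (nhdsWithin 0 (Set.Ioi 0)) =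
      ENNReal.ofReal P * Filter.liminf g (nhdsWithin 0 (Set.Ioi 0)) := by
    refine (Monotone.map_liminf_of_continuousAt (f := fun x => ENNReal.ofReal P * x)
      (fun _ _ h => mul_le_mul_right h _) g ?_).symm
    exact (ENNReal.continuous_const_mul ENNReal.ofReal_ne_top).continuousAt
  -- final chain
  have hev : ∀ᶠ t in nhdsWithin (0 : ℝ) (Set.Ioi 0),
      volume (Metric.thickening t (L '' X)) / ENNReal.ofReal (unitBallVol N * t ^ N) ≤
        ENNReal.ofReal P * g (t / ap) :=
    eventually_mem_nhdsWithin.mono hpt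
  calc lowerMinkowskiContent n k (L '' X)
      ≤ Filter.liminf (fun t => ENNReal.ofReal P * g (t / ap)) (nhdsWithin 0 (Set.Ioi 0)) :=
        Filter.liminf_le_liminf hev
    _ = Filter.liminf (fun s => ENNReal.ofReal P * g s)
          (Filter.map (fun t : ℝ => t / ap) (nhdsWithin 0 (Set.Ioi 0))) :=
        Filter.liminf_comp _ _ _
    _ = Filter.liminf (fun s => ENNReal.ofReal P * g s) (nhdsWithin 0 (Set.Ioi 0)) := by
        rw [hmap]
    _ = ENNReal.ofReal P * Filter.liminf g (nhdsWithin 0 (Set.Ioi 0)) := hconst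
    _ = ENNReal.ofReal P * lowerMinkowskiContent n k X := rfl
end

section
/- Let n ≥ 1, 0 ≤ k ≤ n, and let L : ℝ^n → ℝ^n be the diagonal linear map L(x_1, …, x_n) = (a_1 x_1, …, a_n x_n) with 0 < a_1 ≤ a_2 ≤ … ≤ a_n. Then for every set X ⊆ ℝ^n the lower k-dimensional Minkowski content satisfies the lower bound a_1 a_2 ⋯ a_k · M_k(X) ≤ M_k(L(X)). -/
open MeasureTheory Metric Filter

namespace DiagAux

open Set
open scoped Pointwise

lemma abs_convex {p d c : ℝ} (hc : 1 ≤ c) :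
    |p + d| + |p + (c - 1) * d| ≤ |p| + |p + c * d| := by
  have hc0 : (0:ℝ) < c := lt_of_lt_of_le one_pos hc
  have h1 : c * |p + d| ≤ (c - 1) * |p| + |p + c * d| := by
    have he : c * (p + d) = (c - 1) * p + (p + c * d) := by ring
    calc c * |p + d| = |c * (p + d)| := by
          rw [abs_mul, abs_of_pos hc0]
      _ = |(c - 1) * p + (p + c * d)| := by rw [he]
      _ ≤ |(c - 1) * p| + |p + c * d| := abs_add_le _ _
      _ = (c - 1) * |p| + |p + c * d| := by
          rw [abs_mul, abs_of_nonneg (by linarith : (0:ℝ) ≤ c - 1)]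
  have h2 : c * |p + (c - 1) * d| ≤ |p| + (c - 1) * |p + c * d| := by
    have he : c * (p + (c - 1) * d) = p + (c - 1) * (p + c * d) := by ring
    calc c * |p + (c - 1) * d| = |c * (p + (c - 1) * d)| := by
          rw [abs_mul, abs_of_pos hc0]
      _ = |p + (c - 1) * (p + c * d)| := by rw [he]
      _ ≤ |p| + |(c - 1) * (p + c * d)| := abs_add_le _ _
      _ = |p| + (c - 1) * |p + c * d| := by
          rw [abs_mul, abs_of_nonneg (by linarith : (0:ℝ) ≤ c - 1)]
  nlinarith [abs_nonneg (p + d), abs_nonneg (p + (c-1)*d), abs_nonneg p, abs_nonneg (p + c*d)]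

/-- open interval with center `A` and radius `r` -/
def U1 (A r : ℝ) : Set ℝ := Set.Ioo (A - r) (A + r)

lemma mem_U1 {A r x : ℝ} : x ∈ U1 A r ↔ |x - A| < r := by
  rw [U1, Set.mem_Ioo, abs_lt]
  constructor <;> rintro ⟨h1, h2⟩ <;> exact ⟨by linarith, by linarith⟩

lemma oneD_finite {N : ℕ} (A r : Fin N → ℝ) {c : ℝ} (hc : 1 ≤ c) :
    volume (⋃ j, U1 (A j) (r j)) ≤ volume (⋃ j, U1 (c * A j) (r j)) := by
  classical
  set D : Fin N → ℝ → ℝ := fun j x => r j - |x - A j| with hD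
  have memD : ∀ {j x}, x ∈ U1 (A j) (r j) ↔ 0 < D j x := by
    intro j x; rw [mem_U1, hD]; constructor <;> intro h <;> simp at h ⊢ <;> linarith
  set key : ℝ → Fin N → ℝ ×ₗ (ℝ ×ₗ ℕ) := fun x j => toLex (D j x, toLex (A j, (j : ℕ)))
    with hkey
  have key_fst : ∀ {x i j}, key x i ≤ key x j → D i x ≤ D j x := by
    intro x i j h
    rcases (Prod.Lex.le_iff).1 h with h' | ⟨h', _⟩
    · exact le_of_lt h'
    · exact le_of_eq h'
  have key_strict : ∀ {x i j}, key x i ≤ key x j → A j < A i → D i x < D j x := by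
    intro x i j h hA
    rcases (Prod.Lex.le_iff).1 h with h' | ⟨h', h''⟩
    · exact h'
    · exfalso
      rcases (Prod.Lex.le_iff).1 h'' with h3 | ⟨h3, _⟩ <;> simp [hkey] at h3 <;> linarith
  have key_inj : ∀ {x i j}, key x i = key x j → i = j := by
    intro x i j h
    rw [hkey] at h
    simp only [toLex_inj, Prod.mk.injEq] at h
    exact Fin.ext h.2.2
  set Asel : Fin N → Set ℝ := fun j =>
    {x | x ∈ U1 (A j) (r j) ∧ ∀ i, x ∈ U1 (A i) (r i) → key x i ≤ key x j} with hAsel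
  -- covering
  have cover : (⋃ j, U1 (A j) (r j)) ⊆ ⋃ j, Asel j := by
    intro x hx
    rw [Set.mem_iUnion] at hx ⊢
    obtain ⟨j₀, hj₀⟩ := hx
    obtain ⟨jm, hjm, hmax⟩ := Finset.exists_max_image
      (Finset.univ.filter fun i => x ∈ U1 (A i) (r i)) (key x) ⟨j₀, by simp [hj₀]⟩
    exact ⟨jm, ⟨(Finset.mem_filter.1 hjm).2, fun i hi => hmax i (by simp [hi])⟩⟩
  -- measurability
  have hDcont : ∀ j, Continuous (D j) := by
    intro j
    exact continuous_const.sub ((continuous_id.sub continuous_const).abs)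
  have hkeymeas : ∀ i j : Fin N, MeasurableSet {x | key x i ≤ key x j} := by
    intro i j
    have : {x | key x i ≤ key x j} =
        {x | D i x < D j x} ∪ ({x | D i x = D j x} ∩
          {x | (toLex (A i, (i:ℕ)) : ℝ ×ₗ ℕ) ≤ toLex (A j, (j:ℕ))}) := by
      ext x
      simp only [Set.mem_setOf_eq, Set.mem_union, Set.mem_inter_iff, hkey]
      exact Prod.Lex.le_iff
    rw [this]
    refine (measurableSet_lt (hDcont i).measurable (hDcont j).measurable).union
      ((measurableSet_eq_fun (hDcont i).measurable (hDcont j).measurable).inter ?_)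
    by_cases h : (toLex (A i, (i:ℕ)) : ℝ ×ₗ ℕ) ≤ toLex (A j, (j:ℕ))
    · simp [h]
    · simp [h]
  have hAselMeas : ∀ j, MeasurableSet (Asel j) := by
    intro j
    have : Asel j = U1 (A j) (r j) ∩
        ⋂ i, ((U1 (A i) (r i))ᶜ ∪ {x | key x i ≤ key x j}) := by
      ext x
      simp only [hAsel, Set.mem_setOf_eq, Set.mem_inter_iff, Set.mem_iInter, Set.mem_union,
        Set.mem_compl_iff]
      constructor
      · rintro ⟨h1, h2⟩
        exact ⟨h1, fun i => by by_cases hx : x ∈ U1 (A i) (r i) <;> [exact Or.inr (h2 i hx); exact Or.inl hx]⟩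
      · rintro ⟨h1, h2⟩
        refine ⟨h1, fun i hx => ?_⟩
        rcases h2 i with h | h
        · exact absurd hx h
        · exact h
    rw [this]
    exact measurableSet_Ioo.inter (MeasurableSet.iInter fun i =>
      (measurableSet_Ioo.compl.union (hkeymeas i j)))
  -- translated pieces
  set τ : Fin N → ℝ := fun j => (c - 1) * A j with hτ
  set T : Fin N → Set ℝ := fun j => (fun y => y - τ j) ⁻¹' Asel j with hT
  have hTmeas : ∀ j, MeasurableSet (T j) := fun j =>
    (hAselMeas j).preimage (measurable_id.sub measurable_const)
  have hTvol : ∀ j, volume (T j) = volume (Asel j) := by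
    intro j
    rw [hT]
    simp only [sub_eq_add_neg]
    exact measure_preimage_add_right volume (-τ j) (Asel j)
  -- core disjointness argument
  have core : ∀ (i j : Fin N) (x y : ℝ), x ∈ Asel i → y ∈ Asel j → A j < A i →
      x + τ i = y + τ j → False := by
    intro i j x y hx hy hA hxy
    set d := A i - A j with hd
    have hd0 : 0 < d := by rw [hd]; linarith
    have hyx : y = x + (c - 1) * d := by
      rw [hτ] at hxy; simp only at hxy; rw [hd]; ring_nf; ring_nf at hxy; linarith
    have h1 : D j x ≤ D i x := by
      by_cases hxj : x ∈ U1 (A j) (r j)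
      · exact key_fst (hx.2 j hxj)
      · have h2 : ¬ (0 < D j x) := fun h => hxj (memD.2 h)
        have h3 : 0 < D i x := memD.1 hx.1
        linarith [not_lt.1 h2]
    have h2 : D i y < D j y := by
      by_cases hyi : y ∈ U1 (A i) (r i)
      · exact key_strict (hy.2 i hyi) hA
      · have h2 : ¬ (0 < D i y) := fun h => hyi (memD.2 h)
        have h3 : 0 < D j y := memD.1 hy.1
        linarith [not_lt.1 h2]
    -- arithmetic contradiction
    have hconv := abs_convex (p := x - A i) (d := d) hc
    have e1 : x - A j = (x - A i) + d := by rw [hd]; ring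
    have e2 : y - A i = (x - A i) + (c - 1) * d := by rw [hyx]; ring
    have e3 : y - A j = (x - A i) + c * d := by rw [hyx, hd]; ring
    rw [hD] at h1 h2
    simp only at h1 h2
    rw [e1] at h1
    rw [e2, e3] at h2
    linarith
  have hdisj : Pairwise (Function.onFun Disjoint T) := by
    intro i j hij
    rw [Function.onFun, Set.disjoint_left]
    intro z hzi hzj
    rw [hT] at hzi hzj
    simp only [Set.mem_preimage] at hzi hzj
    set x := z - τ i with hxdef
    set y := z - τ j with hydef
    have hxy : x + τ i = y + τ j := by rw [hxdef, hydef]; ring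
    rcases lt_trichotomy (A i) (A j) with h | h | h
    · exact core j i y x hzj hzi h hxy.symm
    · -- equal centers: x = y
      have hxyeq : x = y := by rw [hxdef, hydef, hτ]; simp [h]
      have k1 : key x j ≤ key x i := hzi.2 j (hxyeq ▸ hzj.1)
      have k2 : key x i ≤ key x j := by
        have := hzj.2 i (hxyeq ▸ hzi.1)
        rw [← hxyeq] at this
        exact this
      exact hij (key_inj (le_antisymm k2 k1))
    · exact core i j x y hzi hzj h hxy
  -- piece inside target
  have hTsub : ∀ j, T j ⊆ U1 (c * A j) (r j) := by
    intro j z hz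
    have h2 := mem_U1.1 hz.1
    rw [mem_U1]
    have e : z - c * A j = z - τ j - A j := by simp only [hτ]; ring
    rw [e]; exact h2
  -- final computation
  calc volume (⋃ j, U1 (A j) (r j)) ≤ volume (⋃ j, Asel j) := measure_mono cover
    _ ≤ ∑' j, volume (Asel j) := measure_iUnion_le _
    _ = ∑' j, volume (T j) := by
        refine tsum_congr fun j => (hTvol j).symm
    _ = volume (⋃ j, T j) := (measure_iUnion hdisj hTmeas).symm
    _ ≤ volume (⋃ j, U1 (c * A j) (r j)) := measure_mono (Set.iUnion_mono hTsub)

lemma oneD {ι : Type*} (A r : ι → ℝ) {c : ℝ} (hc : 1 ≤ c) :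
    volume (⋃ j, U1 (A j) (r j)) ≤ volume (⋃ j, U1 (c * A j) (r j)) := by
  obtain ⟨T, hTc, hTU⟩ := TopologicalSpace.isOpen_iUnion_countable
    (fun j => U1 (A j) (r j)) (fun j => isOpen_Ioo)
  rw [← hTU]
  rcases T.eq_empty_or_nonempty with rfl | hTne
  · simp
  obtain ⟨f, hf⟩ := hTc.exists_eq_range hTne
  have h1 : ⋃ i ∈ T, U1 (A i) (r i) = ⋃ n : ℕ, U1 (A (f n)) (r (f n)) := by
    rw [hf, Set.biUnion_range]
  rw [h1, measure_iUnion_eq_iSup_accumulate]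
  refine iSup_le fun n => ?_
  have hacc : Set.accumulate (fun n => U1 (A (f n)) (r (f n))) n
      = ⋃ j : Fin (n+1), U1 (A (f j)) (r (f j)) := by
    ext x
    simp only [Set.mem_accumulate, Set.mem_iUnion]
    constructor
    · rintro ⟨jj, hjj, hx⟩
      exact ⟨⟨jj, by omega⟩, hx⟩
    · rintro ⟨jj, hx⟩
      exact ⟨jj.1, by omega, hx⟩
  rw [hacc]
  refine le_trans (oneD_finite (fun j : Fin (n+1) => A (f j)) (fun j => r (f j)) hc) ?_
  exact measure_mono (Set.iUnion_subset fun j =>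
    Set.subset_iUnion_of_subset (f j) subset_rfl)

lemma oneD_shrink {ι : Type*} (A r : ι → ℝ) {dd : ℝ} (hd0 : 0 < dd) (hd1 : dd ≤ 1) :
    ENNReal.ofReal dd * volume (⋃ j, U1 (A j) (r j)) ≤ volume (⋃ j, U1 (dd * A j) (r j)) := by
  have hsub : (⋃ j, U1 (A j) (r j)) ⊆ ⋃ j, U1 (A j) (r j / dd) := by
    refine Set.iUnion_mono fun j => ?_
    intro x hx
    rw [mem_U1] at hx ⊢
    have h0 : 0 < r j := lt_of_le_of_lt (abs_nonneg _) hx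
    calc |x - A j| < r j := hx
      _ ≤ r j / dd := by rw [le_div_iff₀ hd0]; nlinarith
  have himg : dd • (⋃ j, U1 (A j) (r j / dd)) = ⋃ j, U1 (dd * A j) (r j) := by
    rw [Set.smul_set_iUnion]
    refine Set.iUnion_congr fun j => ?_
    have h2 : dd • U1 (A j) (r j / dd) = (fun y => dd * y) '' U1 (A j) (r j / dd) := rfl
    rw [h2, U1, U1, Set.image_mul_left_Ioo hd0]
    congr 1 <;> field_simp <;> ring
  calc ENNReal.ofReal dd * volume (⋃ j, U1 (A j) (r j))
      ≤ ENNReal.ofReal dd * volume (⋃ j, U1 (A j) (r j / dd)) := by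
        exact mul_le_mul_right (measure_mono hsub) _
    _ = volume (dd • ⋃ j, U1 (A j) (r j / dd)) := by
        rw [Measure.addHaar_smul_of_nonneg volume hd0.le, Module.finrank_self, pow_one]
    _ = _ := by rw [himg]

variable {m : ℕ}

/-- Euclidean-style ball (with squared radius `q`) in the product model. -/
def SB (b : Fin (m+1) → ℝ) (q : ℝ) : Set (Fin (m+1) → ℝ) :=
  {x | ∑ i, (x i - b i)^2 < q}

lemma isOpen_SB {b : Fin (m+1) → ℝ} {q : ℝ} : IsOpen (SB b q) := by
  have hcont : Continuous fun x : Fin (m+1) → ℝ => ∑ i, (x i - b i)^2 := by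
    refine continuous_finset_sum _ fun i _ => ?_
    exact ((continuous_apply i).sub continuous_const).pow 2
  exact isOpen_lt hcont continuous_const

lemma vol_iUnion_SB {ι : Type*} (b : ι → (Fin (m+1) → ℝ)) (q : ι → ℝ) (i₀ : Fin (m+1)) :
    volume (⋃ j, SB (b j) (q j)) =
      ∫⁻ w : Fin m → ℝ,
        volume (⋃ j, U1 (b j i₀)
          (Real.sqrt (q j - ∑ l, (w l - b j (i₀.succAbove l))^2))) := by
  classical
  set Tset : Set (ℝ × (Fin m → ℝ)) :=
    ⋃ j, {yw | (yw.1 - b j i₀)^2 + ∑ l, (yw.2 l - b j (i₀.succAbove l))^2 < q j} with hTset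
  have hTopen : IsOpen Tset := by
    refine isOpen_iUnion fun j => ?_
    have hcont : Continuous fun yw : ℝ × (Fin m → ℝ) =>
        (yw.1 - b j i₀)^2 + ∑ l, (yw.2 l - b j (i₀.succAbove l))^2 := by
      refine ((continuous_fst.sub continuous_const).pow 2).add ?_
      refine continuous_finset_sum _ fun l _ => ?_
      exact (((continuous_apply l).comp continuous_snd).sub continuous_const).pow 2
    exact isOpen_lt hcont continuous_const
  have hpre : (⋃ j, SB (b j) (q j)) =
      (MeasurableEquiv.piFinSuccAbove (fun _ => ℝ) i₀) ⁻¹' Tset := by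
    ext x
    simp only [Set.mem_iUnion, Set.mem_preimage, hTset, SB, Set.mem_setOf_eq]
    refine exists_congr fun j => ?_
    rw [Fin.sum_univ_succAbove (fun i => (x i - b j i)^2) i₀]
    rfl
  rw [hpre,
    (volume_preserving_piFinSuccAbove (fun _ : Fin (m+1) => ℝ) i₀).measure_preimage
      hTopen.measurableSet.nullMeasurableSet]
  rw [Measure.volume_eq_prod, Measure.prod_apply_symm hTopen.measurableSet]
  refine lintegral_congr fun w => ?_
  congr 1
  ext y
  simp only [Set.mem_preimage, hTset, Set.mem_iUnion, Set.mem_setOf_eq]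
  refine exists_congr fun j => ?_
  rw [mem_U1, ← Real.sqrt_sq_eq_abs]
  rw [Real.sqrt_lt_sqrt_iff (sq_nonneg _)]
  constructor <;> intro h <;> linarith

lemma multi_stretch {ι : Type*} (b : ι → (Fin (m+1) → ℝ)) (q : ι → ℝ) (i₀ : Fin (m+1))
    {dd : ℝ} (hd : 1 ≤ dd) :
    volume (⋃ j, SB (b j) (q j)) ≤
      volume (⋃ j, SB (Function.update (b j) i₀ (dd * b j i₀)) (q j)) := by
  rw [vol_iUnion_SB b q i₀, vol_iUnion_SB _ q i₀]
  refine lintegral_mono fun w => ?_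
  have h1 : ∀ j, Function.update (b j) i₀ (dd * b j i₀) i₀ = dd * b j i₀ := fun j =>
    Function.update_self i₀ _ (b j)
  have h2 : ∀ (j : ι) (l : Fin m), Function.update (b j) i₀ (dd * b j i₀) (i₀.succAbove l)
      = b j (i₀.succAbove l) := fun j l =>
    Function.update_of_ne (Fin.succAbove_ne i₀ l) _ (b j)
  simp only [h1, h2]
  exact oneD _ _ hd

lemma multi_shrink {ι : Type*} (b : ι → (Fin (m+1) → ℝ)) (q : ι → ℝ) (i₀ : Fin (m+1))
    {dd : ℝ} (hd0 : 0 < dd) (hd1 : dd ≤ 1) :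
    ENNReal.ofReal dd * volume (⋃ j, SB (b j) (q j)) ≤
      volume (⋃ j, SB (Function.update (b j) i₀ (dd * b j i₀)) (q j)) := by
  rw [vol_iUnion_SB b q i₀, vol_iUnion_SB _ q i₀]
  rw [← lintegral_const_mul' _ _ ENNReal.ofReal_ne_top]
  refine lintegral_mono fun w => ?_
  have h1 : ∀ j, Function.update (b j) i₀ (dd * b j i₀) i₀ = dd * b j i₀ := fun j =>
    Function.update_self i₀ _ (b j)
  have h2 : ∀ (j : ι) (l : Fin m), Function.update (b j) i₀ (dd * b j i₀) (i₀.succAbove l)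
      = b j (i₀.succAbove l) := fun j l =>
    Function.update_of_ne (Fin.succAbove_ne i₀ l) _ (b j)
  simp only [h1, h2]
  exact oneD_shrink _ _ hd0 hd1

lemma multi_comp {ι : Type*} (a : Fin (m+1) → ℝ) (k : ℕ)
    (h1 : ∀ i : Fin (m+1), (i:ℕ) < k → 0 < a i ∧ a i ≤ 1)
    (h2 : ∀ i : Fin (m+1), ¬((i:ℕ) < k) → 1 ≤ a i)
    (b : ι → (Fin (m+1) → ℝ)) (q : ι → ℝ) (F : Finset (Fin (m+1))) :
    ENNReal.ofReal (∏ i ∈ F.filter (fun i => i.val < k), a i) * volume (⋃ j, SB (b j) (q j))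
      ≤ volume (⋃ j, SB (fun i => if i ∈ F then a i * b j i else b j i) (q j)) := by
  classical
  induction F using Finset.induction with
  | empty =>
    simp only [Finset.filter_empty, Finset.prod_empty, ENNReal.ofReal_one, one_mul,
      Finset.notMem_empty, if_false]
    exact le_refl _
  | @insert i₀ F hi₀ ih =>
    have hupd : ∀ j : ι, (fun i => if i ∈ insert i₀ F then a i * b j i else b j i)
        = Function.update (fun i => if i ∈ F then a i * b j i else b j i) i₀
            (a i₀ * (fun i => if i ∈ F then a i * b j i else b j i) i₀) := by
      intro j
      funext i
      by_cases h : i = i₀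
      · subst h
        simp [hi₀]
      · simp [Function.update_of_ne h, Finset.mem_insert, h]
    simp only [hupd]
    by_cases hik : (i₀ : ℕ) < k
    · rw [Finset.filter_insert, if_pos hik,
        Finset.prod_insert (by simp [hi₀])]
      calc ENNReal.ofReal (a i₀ * ∏ i ∈ F.filter (fun i => i.val < k), a i)
            * volume (⋃ j, SB (b j) (q j))
          = ENNReal.ofReal (a i₀) *
            (ENNReal.ofReal (∏ i ∈ F.filter (fun i => i.val < k), a i)
              * volume (⋃ j, SB (b j) (q j))) := by
            rw [ENNReal.ofReal_mul (le_of_lt (h1 i₀ hik).1), mul_assoc]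
        _ ≤ ENNReal.ofReal (a i₀) *
            volume (⋃ j, SB (fun i => if i ∈ F then a i * b j i else b j i) (q j)) :=
            mul_le_mul_right ih _
        _ ≤ _ := multi_shrink _ q i₀ (h1 i₀ hik).1 (h1 i₀ hik).2
    · rw [Finset.filter_insert, if_neg hik]
      exact le_trans ih (multi_stretch _ q i₀ (h2 i₀ hik))

lemma chain {k : ℕ} (hk : k ≤ m + 1) (a : Fin (m+1) → ℝ) (hpos : ∀ i, 0 < a i)
    (hmono : Monotone a)
    (L : EuclideanSpace ℝ (Fin (m+1)) → EuclideanSpace ℝ (Fin (m+1)))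
    (hL : L = fun x : EuclideanSpace ℝ (Fin (m+1)) => WithLp.toLp 2 (fun i : Fin (m+1) => a i * x i))
    (X : Set (EuclideanSpace ℝ (Fin (m+1)))) {t : ℝ} (ht : 0 < t) :
    ENNReal.ofReal ((∏ i ∈ Finset.univ.filter fun i : Fin (m+1) => (i:ℕ) < k, a i)
        * (a ⟨min k m, Nat.lt_succ_of_le (min_le_right _ _)⟩) ^ (m+1-k)) *
      volume (Metric.thickening (t / a ⟨min k m, Nat.lt_succ_of_le (min_le_right _ _)⟩) X)
      ≤ volume (Metric.thickening t (L '' X)) := by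
  have hLa : ∀ (z : EuclideanSpace ℝ (Fin (m+1))) (i : Fin (m+1)), L z i = a i * z i := by
    rw [hL]; intro z i; rfl
  classical
  set cidx : Fin (m+1) := ⟨min k m, Nat.lt_succ_of_le (min_le_right _ _)⟩ with hcidx
  set c := a cidx with hcdef
  have hc0 : 0 < c := hpos cidx
  set τ := t / c with hτdef
  have hτ0 : 0 < τ := div_pos ht hc0
  have htc : t = c * τ := by rw [hτdef]; field_simp
  set e := (MeasurableEquiv.toLp 2 (Fin (m+1) → ℝ)).symm with he
  -- balls are preimages of SB
  have hball : ∀ (w : EuclideanSpace ℝ (Fin (m+1))) (s : ℝ), 0 < s →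
      Metric.ball w s = e ⁻¹' SB (fun i => w i) (s^2) := by
    intro w s hs
    ext z
    rw [Metric.mem_ball, Set.mem_preimage, EuclideanSpace.dist_eq, Real.sqrt_lt' hs]
    simp only [SB, Set.mem_setOf_eq, Real.dist_eq, sq_abs]
    exact Iff.rfl
  -- thickenings as unions of balls over the subtype
  have hthick : ∀ (Y : Set (EuclideanSpace ℝ (Fin (m+1)))) (g : EuclideanSpace ℝ (Fin (m+1)) → EuclideanSpace ℝ (Fin (m+1))) (s : ℝ),
      Metric.thickening s (g '' Y) = ⋃ x : Y, Metric.ball (g x.1) s := by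
    intro Y g s
    rw [Metric.thickening_eq_biUnion_ball, Set.biUnion_image, Set.biUnion_eq_iUnion]
  -- volume transfer
  have htransfer : ∀ (b : X → EuclideanSpace ℝ (Fin (m+1))) (s : ℝ), 0 < s →
      volume (⋃ x : X, Metric.ball (b x) s)
        = volume (⋃ x : X, SB (fun i => b x i) (s^2)) := by
    intro b s hs
    have h1 : (⋃ x : X, Metric.ball (b x) s)
        = e ⁻¹' (⋃ x : X, SB (fun i => b x i) (s^2)) := by
      rw [Set.preimage_iUnion]
      refine Set.iUnion_congr fun x => ?_
      rw [hball _ s hs]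
    rw [h1]
    exact (EuclideanSpace.volume_preserving_symm_measurableEquiv_toLp (Fin (m+1))).measure_preimage
      (isOpen_iUnion fun x => isOpen_SB).measurableSet.nullMeasurableSet
  -- step 1 : volume of the thickening of the image
  have hstep1 : volume (Metric.thickening t (L '' X))
      = volume (⋃ x : X, SB (fun i => a i * x.1 i) (t^2)) := by
    rw [Metric.thickening_eq_biUnion_ball, Set.biUnion_image, Set.biUnion_eq_iUnion]
    have := htransfer (fun x => L x.1) t ht
    simp only [hLa] at this
    exact this
  -- step 1' : volume of the thickening of X itself
  have hstep1' : volume (Metric.thickening τ X)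
      = volume (⋃ x : X, SB (fun i => x.1 i) (τ^2)) := by
    have hXid : X = (fun y : EuclideanSpace ℝ (Fin (m+1)) => y) '' X := by
      rw [Set.image_id']
    calc volume (Metric.thickening τ X)
        = volume (⋃ x : X, Metric.ball x.1 τ) := by
          rw [Metric.thickening_eq_biUnion_ball, Set.biUnion_eq_iUnion]
      _ = _ := htransfer (fun x => x.1) τ hτ0
  -- step 2 : pull out the dilation
  have hSBsmul : (⋃ x : X, SB (fun i => a i * x.1 i) (t^2))
      = c • ⋃ x : X, SB (fun i => (a i / c) * x.1 i) (τ^2) := by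
    rw [Set.smul_set_iUnion]
    refine Set.iUnion_congr fun x => ?_
    ext z
    rw [Set.mem_smul_set_iff_inv_smul_mem₀ hc0.ne']
    simp only [SB, Set.mem_setOf_eq, Pi.smul_apply, smul_eq_mul]
    have hsum : ∑ i, ((c⁻¹ * z i) - (a i / c) * x.1 i)^2
        = c⁻¹^2 * ∑ i, (z i - a i * x.1 i)^2 := by
      rw [Finset.mul_sum]
      refine Finset.sum_congr rfl fun i _ => ?_
      rw [div_eq_mul_inv]
      ring
    rw [hsum, htc, inv_pow, inv_mul_lt_iff₀ (by positivity : (0:ℝ) < c^2), mul_pow]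
  -- step 3 : volume of dilation
  have hfinrank : Module.finrank ℝ (Fin (m+1) → ℝ) = m+1 := by
    rw [Module.finrank_pi]
    exact Fintype.card_fin _
  have hsmulvol : volume (c • ⋃ x : X, SB (fun i => (a i / c) * x.1 i) (τ^2))
      = ENNReal.ofReal (c^(m+1)) * volume (⋃ x : X, SB (fun i => (a i / c) * x.1 i) (τ^2)) := by
    rw [Measure.addHaar_smul_of_nonneg volume hc0.le, hfinrank]
  -- step 4 : coordinatewise comparison
  have hcv : (cidx : ℕ) = min k m := rfl
  have h1 : ∀ i : Fin (m+1), (i:ℕ) < k → 0 < a i / c ∧ a i / c ≤ 1 := by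
    intro i hik
    have hle : a i ≤ c := hmono (by
      rw [Fin.le_def]
      have := i.isLt
      omega)
    exact ⟨div_pos (hpos i) hc0, (div_le_one hc0).2 hle⟩
  have h2 : ∀ i : Fin (m+1), ¬((i:ℕ) < k) → 1 ≤ a i / c := by
    intro i hik
    have hle : c ≤ a i := hmono (by
      rw [Fin.le_def]
      have := i.isLt
      omega)
    exact (one_le_div hc0).2 hle
  have hcomp := multi_comp (fun i => a i / c) k h1 h2
    (fun x : X => fun i => x.1 i) (fun _ => τ^2) Finset.univ
  simp only [Finset.mem_univ, if_true] at hcomp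
  -- the product over the filtered set
  have hcard : (Finset.univ.filter fun i : Fin (m+1) => (i:ℕ) < k).card = k := by
    have heq : (Finset.univ.filter fun i : Fin (m+1) => (i:ℕ) < k)
        = Finset.attachFin (Finset.range k) (fun x hx => by
            simp only [Finset.mem_range] at hx
            omega) := by
      ext i
      simp [Finset.mem_attachFin]
    rw [heq, Finset.card_attachFin, Finset.card_range]
  have hprod : (∏ i ∈ Finset.univ.filter (fun i : Fin (m+1) => (i:ℕ) < k), (a i / c))
      = (∏ i ∈ Finset.univ.filter (fun i : Fin (m+1) => (i:ℕ) < k), a i) / c^k := by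
    rw [Finset.prod_div_distrib, Finset.prod_const, hcard]
  rw [hprod] at hcomp
  -- assemble
  have hPnn : (0:ℝ) ≤ ∏ i ∈ Finset.univ.filter (fun i : Fin (m+1) => (i:ℕ) < k), a i :=
    Finset.prod_nonneg fun i _ => (hpos i).le
  have hconst : (∏ i ∈ Finset.univ.filter (fun i : Fin (m+1) => (i:ℕ) < k), a i) * c^(m+1-k)
      = c^(m+1) * ((∏ i ∈ Finset.univ.filter (fun i : Fin (m+1) => (i:ℕ) < k), a i) / c^k) := by
    have hpows : c^(m+1) = c^(m+1-k) * c^k := by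
      rw [← pow_add]
      congr 1
      omega
    rw [hpows]
    field_simp
  calc ENNReal.ofReal ((∏ i ∈ Finset.univ.filter fun i : Fin (m+1) => (i:ℕ) < k, a i)
        * c ^ (m+1-k)) * volume (Metric.thickening τ X)
      = ENNReal.ofReal (c^(m+1)) *
          (ENNReal.ofReal ((∏ i ∈ Finset.univ.filter fun i : Fin (m+1) => (i:ℕ) < k, a i) / c^k)
            * volume (⋃ x : X, SB (fun i => x.1 i) (τ^2))) := by
        rw [hconst, ENNReal.ofReal_mul (by positivity), mul_assoc, hstep1']
    _ ≤ ENNReal.ofReal (c^(m+1)) *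
          volume (⋃ x : X, SB (fun i => (a i / c) * x.1 i) (τ^2)) :=
        mul_le_mul_right hcomp _
    _ = volume (c • ⋃ x : X, SB (fun i => (a i / c) * x.1 i) (τ^2)) := hsmulvol.symm
    _ = volume (⋃ x : X, SB (fun i => a i * x.1 i) (t^2)) := by rw [hSBsmul]
    _ = _ := hstep1.symm

end DiagAux

/-- Lower bound for the lower Minkowski content under a diagonal linear map with
nondecreasing positive diagonal entries: `a_1 ⋯ a_k · M_k(X) ≤ M_k(L(X))`. -/
theorem diag_map_lower_bound (n k : ℕ) (hn : 1 ≤ n) (hkn : k ≤ n)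
    (a : Fin n → ℝ) (hpos : ∀ i, 0 < a i) (hmono : Monotone a)
    (L : EuclideanSpace ℝ (Fin n) → EuclideanSpace ℝ (Fin n))
    (hL : L = fun x : EuclideanSpace ℝ (Fin n) => WithLp.toLp 2 (fun i : Fin n => a i * x i))
    (X : Set (EuclideanSpace ℝ (Fin n))) :
    ENNReal.ofReal (∏ i ∈ Finset.univ.filter (fun i : Fin n => (i : ℕ) < k), a i) *
        lowerMinkowskiContent n k X ≤
      lowerMinkowskiContent n k (L '' X) := by
  obtain ⟨m, rfl⟩ : ∃ m, n = m + 1 := ⟨n - 1, by omega⟩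
  set c : ℝ := a ⟨min k m, Nat.lt_succ_of_le (min_le_right _ _)⟩ with hcdef
  have hc0 : 0 < c := hpos _
  set Pr : ℝ := ∏ i ∈ Finset.univ.filter (fun i : Fin (m+1) => (i : ℕ) < k), a i with hPrdef
  have hPrnn : 0 ≤ Pr := Finset.prod_nonneg fun i _ => (hpos i).le
  set v : ℝ := unitBallVol (m + 1 - k) with hvdef
  have hvnn : 0 ≤ v := ENNReal.toReal_nonneg
  set F : ℝ → ENNReal := fun t => volume (Metric.thickening t (L '' X)) /
      ENNReal.ofReal (v * t ^ (m + 1 - k)) with hF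
  set G : ℝ → ENNReal := fun s => volume (Metric.thickening s X) /
      ENNReal.ofReal (v * s ^ (m + 1 - k)) with hG
  have goal_eq : lowerMinkowskiContent (m+1) k X = Filter.liminf G (nhdsWithin 0 (Set.Ioi 0)) := rfl
  have goal_eq' : lowerMinkowskiContent (m+1) k (L '' X)
      = Filter.liminf F (nhdsWithin 0 (Set.Ioi 0)) := rfl
  rw [goal_eq, goal_eq']
  -- pointwise inequality
  have hpoint : ∀ t : ℝ, 0 < t → ENNReal.ofReal Pr * G (t / c) ≤ F t := by
    intro t ht
    have hchain := DiagAux.chain hkn a hpos hmono L hL X ht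
    have hdiv : ENNReal.ofReal (Pr * c ^ (m+1-k)) * volume (Metric.thickening (t / c) X) /
        ENNReal.ofReal (v * t ^ (m + 1 - k)) ≤ F t := by
      rw [hF]
      exact ENNReal.div_le_div_right hchain _
    refine le_trans (le_of_eq ?_) hdiv
    have hts : t ^ (m+1-k) = c ^ (m+1-k) * (t / c) ^ (m+1-k) := by
      rw [div_pow, mul_div_assoc']
      rw [mul_comm]
      rw [mul_div_assoc]
      rw [div_self (by positivity : c ^ (m+1-k) ≠ 0), mul_one]
    have hnum : ENNReal.ofReal (Pr * c ^ (m+1-k))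
        = ENNReal.ofReal (c ^ (m+1-k)) * ENNReal.ofReal Pr := by
      rw [← ENNReal.ofReal_mul (by positivity)]
      rw [mul_comm]
    have hden : ENNReal.ofReal (v * t ^ (m + 1 - k))
        = ENNReal.ofReal (c ^ (m+1-k)) * ENNReal.ofReal (v * (t / c) ^ (m + 1 - k)) := by
      rw [← ENNReal.ofReal_mul (by positivity)]
      congr 1
      rw [hts]
      ring
    rw [hnum, hden, mul_assoc,
      ENNReal.mul_div_mul_left _ _ (ENNReal.ofReal_pos.2 (by positivity)).ne' ENNReal.ofReal_ne_top]
    rw [hG, mul_div_assoc]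
  -- liminf comparison
  have h1 : Filter.liminf (fun t => ENNReal.ofReal Pr * G (t / c)) (nhdsWithin 0 (Set.Ioi 0))
      ≤ Filter.liminf F (nhdsWithin 0 (Set.Ioi 0)) := by
    refine Filter.liminf_le_liminf ?_
    filter_upwards [self_mem_nhdsWithin] with t ht
    exact hpoint t ht
  -- the substitution filter map
  have hfwd : Filter.Tendsto (fun t : ℝ => t / c) (nhdsWithin 0 (Set.Ioi 0))
      (nhdsWithin 0 (Set.Ioi 0)) := by
    apply tendsto_nhdsWithin_of_tendsto_nhds_of_eventually_within
    · have h := (continuous_id.div_const c).tendsto (0:ℝ)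
      simpa using h.mono_left nhdsWithin_le_nhds
    · filter_upwards [self_mem_nhdsWithin] with t ht
      exact div_pos ht hc0
  have hbwd : Filter.Tendsto (fun t : ℝ => t * c) (nhdsWithin 0 (Set.Ioi 0))
      (nhdsWithin 0 (Set.Ioi 0)) := by
    apply tendsto_nhdsWithin_of_tendsto_nhds_of_eventually_within
    · have h := (continuous_mul_right c).tendsto (0:ℝ)
      simpa using h.mono_left nhdsWithin_le_nhds
    · filter_upwards [self_mem_nhdsWithin] with t ht
      exact mul_pos ht hc0
  have hmap : Filter.map (fun t : ℝ => t / c) (nhdsWithin 0 (Set.Ioi 0))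
      = nhdsWithin 0 (Set.Ioi 0) := by
    refine le_antisymm hfwd ?_
    have hcomp : ((fun t : ℝ => t / c) ∘ (fun t : ℝ => t * c)) = id := by
      funext t
      simp only [Function.comp_apply, id_eq]
      field_simp
    calc nhdsWithin (0:ℝ) (Set.Ioi 0)
        = Filter.map ((fun t : ℝ => t / c) ∘ (fun t : ℝ => t * c)) (nhdsWithin 0 (Set.Ioi 0)) := by
          rw [hcomp, Filter.map_id]
      _ = Filter.map (fun t : ℝ => t / c)
            (Filter.map (fun t : ℝ => t * c) (nhdsWithin 0 (Set.Ioi 0))) := by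
          rw [Filter.map_map]
      _ ≤ Filter.map (fun t : ℝ => t / c) (nhdsWithin 0 (Set.Ioi 0)) := Filter.map_mono hbwd
  have h2 : Filter.liminf (fun t => ENNReal.ofReal Pr * G (t / c)) (nhdsWithin 0 (Set.Ioi 0))
      = Filter.liminf (fun s => ENNReal.ofReal Pr * G s) (nhdsWithin 0 (Set.Ioi 0)) := by
    have hco : (fun t => ENNReal.ofReal Pr * G (t / c))
        = (fun s => ENNReal.ofReal Pr * G s) ∘ (fun t : ℝ => t / c) := rfl
    rw [hco, Filter.liminf_comp, hmap]
  -- pulling the constant out of the liminf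
  have h3 : ENNReal.ofReal Pr * Filter.liminf G (nhdsWithin 0 (Set.Ioi 0))
      ≤ Filter.liminf (fun s => ENNReal.ofReal Pr * G s) (nhdsWithin 0 (Set.Ioi 0)) := by
    rw [Filter.liminf_eq, sSup_eq_iSup', ENNReal.mul_iSup]
    refine iSup_le fun b => ?_
    refine Filter.le_liminf_of_le (by isBoundedDefault) ?_
    have hb := b.2
    simp only [Set.mem_setOf_eq] at hb
    filter_upwards [hb] with s hs
    exact mul_le_mul_right hs _
  calc ENNReal.ofReal Pr * Filter.liminf G (nhdsWithin 0 (Set.Ioi 0))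
      ≤ Filter.liminf (fun s => ENNReal.ofReal Pr * G s) (nhdsWithin 0 (Set.Ioi 0)) := h3
    _ = Filter.liminf (fun t => ENNReal.ofReal Pr * G (t / c)) (nhdsWithin 0 (Set.Ioi 0)) := h2.symm
    _ ≤ Filter.liminf F (nhdsWithin 0 (Set.Ioi 0)) := h1
end

section
/- Let n ≥ 1, 0 ≤ k ≤ n, and let L : ℝ^n → ℝ^n be the map L(x_1, x_2, …, x_n) = (a x_1, x_2, …, x_n) with a ≥ 1. Then for every set X ⊆ ℝ^n the lower k-dimensional Minkowski content satisfies M_k(L(X)) ≤ a · M_k(X). -/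
open MeasureTheory Metric Filter

/-- The linear stretching map. -/
noncomputable def Mlin (n : ℕ) (a : ℝ) :
    EuclideanSpace ℝ (Fin n) →ₗ[ℝ] EuclideanSpace ℝ (Fin n) where
  toFun x := WithLp.toLp 2 (fun i : Fin n => if (i : ℕ) = 0 then a * x i else x i)
  map_add' x y := by
    ext i; by_cases h : (i : ℕ) = 0 <;> simp [h, PiLp.add_apply] <;> ring
  map_smul' c x := by
    ext i; by_cases h : (i : ℕ) = 0 <;> simp [h, PiLp.smul_apply, smul_eq_mul] <;> ring

lemma Mlin_apply (n : ℕ) (a : ℝ) (x : EuclideanSpace ℝ (Fin n)) (i : Fin n) :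
    Mlin n a x i = if (i : ℕ) = 0 then a * x i else x i := rfl

lemma Mlin_det (n : ℕ) (hn : 1 ≤ n) (a : ℝ) : LinearMap.det (Mlin n a) = a := by
  classical
  set b := (EuclideanSpace.basisFun (Fin n) ℝ).toBasis
  rw [← LinearMap.det_toMatrix b]
  have : LinearMap.toMatrix b b (Mlin n a) =
      Matrix.diagonal (fun i : Fin n => if (i : ℕ) = 0 then a else 1) := by
    ext i j
    rw [LinearMap.toMatrix_apply]
    have hb : ∀ y : EuclideanSpace ℝ (Fin n), b.repr y i = y i := fun y => rfl
    rw [hb]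
    rw [Mlin_apply]
    have hbj : (b j : EuclideanSpace ℝ (Fin n)) = EuclideanSpace.single j 1 := by
      simp [b, EuclideanSpace.basisFun_apply]
    rw [hbj]
    by_cases h : i = j
    · subst h
      by_cases h0 : (i : ℕ) = 0 <;> simp [h0, EuclideanSpace.single_apply, Matrix.diagonal]
    · by_cases h0 : (i : ℕ) = 0 <;>
        simp [h0, EuclideanSpace.single_apply, Matrix.diagonal_apply_ne _ h, h]
  rw [this, Matrix.det_diagonal,
    Finset.prod_eq_single (⟨0, hn⟩ : Fin n)
      (fun c _ hc => if_neg (by simpa [Fin.ext_iff] using hc))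
      (fun h => absurd (Finset.mem_univ _) h)]
  simp

/-- Stretching the first coordinate by a factor `a ≥ 1` increases the lower
`k`-dimensional Minkowski content at most by the factor `a`: `M_k(L(X)) ≤ a · M_k(X)`. -/
theorem stretch_minkowski (n k : ℕ) (hn : 1 ≤ n) (hkn : k ≤ n)
    (a : ℝ) (ha : 1 ≤ a)
    (L : EuclideanSpace ℝ (Fin n) → EuclideanSpace ℝ (Fin n))
    (hL : L = fun x => WithLp.toLp 2 (fun i : Fin n => if (i : ℕ) = 0 then a * x i else x i))
    (X : Set (EuclideanSpace ℝ (Fin n))) :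
    lowerMinkowskiContent n k (L '' X) ≤
      ENNReal.ofReal a * lowerMinkowskiContent n k X := by
  have ha0 : (0:ℝ) < a := lt_of_lt_of_le one_pos ha
  have hLM : L = fun x => Mlin n a x := by
    subst hL; rfl
  -- inverse map
  set Linv : EuclideanSpace ℝ (Fin n) → EuclideanSpace ℝ (Fin n) :=
    fun u => WithLp.toLp 2 (fun i : Fin n => if (i : ℕ) = 0 then u i / a else u i :
      Fin n → ℝ) with hLinv
  have hLI : ∀ u, L (Linv u) = u := by
    intro u; ext i
    rw [hLM]
    show (if (i : ℕ) = 0 then a * Linv u i else Linv u i) = u i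
    by_cases h : (i : ℕ) = 0 <;> simp [hLinv, h]
    field_simp
  have hIL : ∀ x, Linv (L x) = x := by
    intro x; ext i
    rw [hLM]
    show (if (i : ℕ) = 0 then Mlin n a x i / a else Mlin n a x i) = x i
    by_cases h : (i : ℕ) = 0 <;> simp [Mlin_apply, h]
    field_simp
  have hcontr : ∀ u v, dist (Linv u) (Linv v) ≤ dist u v := by
    intro u v
    rw [EuclideanSpace.dist_eq, EuclideanSpace.dist_eq]
    apply Real.sqrt_le_sqrt
    apply Finset.sum_le_sum
    intro i _
    have : dist (Linv u i) (Linv v i) ≤ dist (u i) (v i) := by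
      by_cases h : (i : ℕ) = 0 <;>
        simp only [hLinv, h, if_true, if_false, ite_true, ite_false]
      · rw [Real.dist_eq, Real.dist_eq, div_sub_div_same, abs_div, abs_of_pos ha0]
        exact div_le_self (abs_nonneg _) ha
      · exact le_refl _
    exact pow_le_pow_left₀ dist_nonneg this 2
  -- the thickening of the image is inside the image of the thickening
  have hsub : ∀ t : ℝ, Metric.thickening t (L '' X) ⊆ L '' Metric.thickening t X := by
    intro t y hy
    rw [Metric.mem_thickening_iff] at hy
    obtain ⟨z, ⟨x, hxX, rfl⟩, hdz⟩ := hy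
    refine ⟨Linv y, ?_, hLI y⟩
    rw [Metric.mem_thickening_iff]
    refine ⟨x, hxX, ?_⟩
    calc dist (Linv y) x = dist (Linv y) (Linv (L x)) := by rw [hIL]
      _ ≤ dist y (L x) := hcontr _ _
      _ < t := hdz
  -- volume estimate
  have hvol : ∀ t : ℝ, volume (Metric.thickening t (L '' X)) ≤
      ENNReal.ofReal a * volume (Metric.thickening t X) := by
    intro t
    calc volume (Metric.thickening t (L '' X))
        ≤ volume (L '' Metric.thickening t X) := measure_mono (hsub t)
      _ = ENNReal.ofReal a * volume (Metric.thickening t X) := by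
          rw [hLM]
          rw [show ((fun x => Mlin n a x) '' Metric.thickening t X)
              = Mlin n a '' Metric.thickening t X from rfl]
          rw [Measure.addHaar_image_linearMap, Mlin_det n hn a, abs_of_pos ha0]
  -- conclude via liminf
  unfold lowerMinkowskiContent
  have h1 : ∀ t : ℝ,
      volume (Metric.thickening t (L '' X)) /
        ENNReal.ofReal (unitBallVol (n - k) * t ^ (n - k)) ≤
      ENNReal.ofReal a * (volume (Metric.thickening t X) /
        ENNReal.ofReal (unitBallVol (n - k) * t ^ (n - k))) := by
    intro t
    rw [← mul_div_assoc]
    exact ENNReal.div_le_div_right (hvol t) _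
  calc Filter.liminf (fun t : ℝ => volume (Metric.thickening t (L '' X)) /
          ENNReal.ofReal (unitBallVol (n - k) * t ^ (n - k))) (nhdsWithin 0 (Set.Ioi 0))
      ≤ Filter.liminf (fun t : ℝ =>
          (fun _ : ℝ => ENNReal.ofReal a) t * ((fun t : ℝ => volume (Metric.thickening t X) /
          ENNReal.ofReal (unitBallVol (n - k) * t ^ (n - k))) t)) (nhdsWithin 0 (Set.Ioi 0)) :=
        Filter.liminf_le_liminf (Filter.Eventually.of_forall h1)
    _ ≤ ENNReal.ofReal a * Filter.liminf (fun t : ℝ => volume (Metric.thickening t X) /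
          ENNReal.ofReal (unitBallVol (n - k) * t ^ (n - k))) (nhdsWithin 0 (Set.Ioi 0)) := by
        have hc : Filter.limsup (fun _ : ℝ => ENNReal.ofReal a) (nhdsWithin 0 (Set.Ioi 0))
            = ENNReal.ofReal a := Filter.limsup_const _
        have := ENNReal.liminf_mul_le
          (u := fun _ : ℝ => ENNReal.ofReal a)
          (v := fun t : ℝ => volume (Metric.thickening t X) /
            ENNReal.ofReal (unitBallVol (n - k) * t ^ (n - k)))
          (f := nhdsWithin 0 (Set.Ioi 0))
          (Or.inl (by rw [hc]; simp [ENNReal.ofReal_eq_zero]; linarith))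
          (Or.inl (by rw [hc]; exact ENNReal.ofReal_ne_top))
        rw [hc] at this
        exact this
end

section
/- Let n ≥ 1, 0 ≤ k ≤ n, and let L : ℝ^n → ℝ^n be the map L(x_1, x_2, …, x_n) = (a x_1, x_2, …, x_n) with 0 < a ≤ 1. Then for every set X ⊆ ℝ^n the lower k-dimensional Minkowski content satisfies M_k(L(X)) ≤ M_k(X). -/
open MeasureTheory Metric Filter

open Set in
/-- Finite 1D contraction lemma: shrinking centers of finitely many intervals
by a factor `a ∈ (0,1]` does not increase the measure of their union. -/
lemma finite1D (a : ℝ) (ha0 : 0 < a) (ha1 : a ≤ 1) :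
    ∀ (N : ℕ) (s : Finset (ℝ × ℝ)), s.card ≤ N →
      volume (⋃ p ∈ s, ball (a * p.1) p.2) ≤ volume (⋃ p ∈ s, ball p.1 p.2) := by
  intro N
  induction N with
  | zero =>
    intro s hs
    have : s = ∅ := Finset.card_eq_zero.mp (Nat.le_zero.mp hs)
    simp [this]
  | succ N ih =>
    intro s hs
    by_cases hOv : ∃ p ∈ s, ∃ q ∈ s, p ≠ q ∧ (ball p.1 p.2 ∩ ball q.1 q.2).Nonempty
    · obtain ⟨p, hp, q, hq, hpq, x, hxp, hxq⟩ := hOv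
      -- merge p and q into their hull
      set lo : ℝ := min (p.1 - p.2) (q.1 - q.2) with hlo
      set hi : ℝ := max (p.1 + p.2) (q.1 + q.2) with hhi
      set c : ℝ := (lo + hi) / 2 with hc
      set r : ℝ := (hi - lo) / 2 with hr
      have hcr1 : c - r = lo := by rw [hc, hr]; ring
      have hcr2 : c + r = hi := by rw [hc, hr]; ring
      rw [Real.ball_eq_Ioo] at hxp hxq
      have hx1 : p.1 - p.2 < x := hxp.1
      have hx2 : x < p.1 + p.2 := hxp.2
      have hx3 : q.1 - q.2 < x := hxq.1
      have hx4 : x < q.1 + q.2 := hxq.2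
      set s' : Finset (ℝ × ℝ) := insert (c, r) ((s.erase p).erase q) with hs'
      have hqe : q ∈ s.erase p := Finset.mem_erase.mpr ⟨Ne.symm hpq, hq⟩
      have hcard : s'.card ≤ N := by
        have h2 : 2 ≤ s.card := Finset.one_lt_card.mpr ⟨p, hp, q, hq, hpq⟩
        have h1 : ((s.erase p).erase q).card = s.card - 1 - 1 := by
          rw [Finset.card_erase_of_mem hqe, Finset.card_erase_of_mem hp]
        have h3 := Finset.card_insert_le (c, r) ((s.erase p).erase q)
        rw [hs']
        omega
      -- union of original balls for p,q equals hull ball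
      have hunion : ball p.1 p.2 ∪ ball q.1 q.2 = ball c r := by
        rw [Real.ball_eq_Ioo, Real.ball_eq_Ioo, Real.ball_eq_Ioo, hcr1, hcr2]
        exact Set.Ioo_union_Ioo' (by linarith) (by linarith)
      -- shrunk balls for p,q are inside shrunk hull ball
      have hsub : ∀ u : ℝ × ℝ, u.1 - u.2 ≥ lo → u.1 + u.2 ≤ hi →
          ball (a * u.1) u.2 ⊆ ball (a * c) r := by
        intro u h1 h2
        rw [Real.ball_eq_Ioo, Real.ball_eq_Ioo]
        have hA : r - u.2 - (u.1 - c) ≥ 0 := by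
          have := hcr2; have := h2; linarith
        have hB : r - u.2 + (u.1 - c) ≥ 0 := by
          have := hcr1; have := h1; linarith
        have h1a : a * u.1 + u.2 ≤ a * c + r := by
          nlinarith [mul_nonneg (by linarith : (0:ℝ) ≤ 1 + a) hA,
            mul_nonneg (by linarith : (0:ℝ) ≤ 1 - a) hB]
        have h2a : a * c - r ≤ a * u.1 - u.2 := by
          nlinarith [mul_nonneg (by linarith : (0:ℝ) ≤ 1 - a) hA,
            mul_nonneg (by linarith : (0:ℝ) ≤ 1 + a) hB]
        exact Set.Ioo_subset_Ioo (by linarith) (by linarith)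
      have hdecomp : ∀ f : ℝ × ℝ → Set ℝ,
          ⋃ u ∈ s, f u = f p ∪ (f q ∪ ⋃ u ∈ (s.erase p).erase q, f u) := by
        intro f
        conv_lhs => rw [← Finset.insert_erase hp, ← Finset.insert_erase hqe]
        simp [Finset.set_biUnion_insert]
      have horig : ⋃ u ∈ s', ball u.1 u.2 = ⋃ u ∈ s, ball u.1 u.2 := by
        rw [hdecomp (fun u => ball u.1 u.2), hs', Finset.set_biUnion_insert, ← hunion]
        simp only [Set.union_assoc]
      have hshr : ⋃ u ∈ s, ball (a * u.1) u.2 ⊆ ⋃ u ∈ s', ball (a * u.1) u.2 := by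
        rw [hdecomp (fun u => ball (a * u.1) u.2), hs', Finset.set_biUnion_insert]
        apply Set.union_subset
        · exact (hsub p (min_le_left _ _) (le_max_left _ _)).trans Set.subset_union_left
        · apply Set.union_subset
          · exact (hsub q (min_le_right _ _) (le_max_right _ _)).trans Set.subset_union_left
          · exact Set.subset_union_right
      calc volume (⋃ u ∈ s, ball (a * u.1) u.2)
          ≤ volume (⋃ u ∈ s', ball (a * u.1) u.2) := measure_mono hshr
        _ ≤ volume (⋃ u ∈ s', ball u.1 u.2) := ih s' hcard
        _ = volume (⋃ u ∈ s, ball u.1 u.2) := by rw [horig]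
    · -- all balls pairwise disjoint
      push_neg at hOv
      have hdisj : (↑s : Set (ℝ × ℝ)).PairwiseDisjoint (fun u => ball u.1 u.2) := by
        intro p hp q hq hpq
        have := hOv p hp q hq hpq
        simp only [Function.onFun]
        exact Set.disjoint_iff_inter_eq_empty.mpr this
      calc volume (⋃ u ∈ s, ball (a * u.1) u.2)
          ≤ ∑ u ∈ s, volume (ball (a * u.1) u.2) := measure_biUnion_finset_le s _
        _ = ∑ u ∈ s, volume (ball u.1 u.2) := by
            simp [Real.volume_ball]
        _ = volume (⋃ u ∈ s, ball u.1 u.2) :=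
            (measure_biUnion_finset hdisj fun u _ => measurableSet_ball).symm

open Set in
/-- Countable (sequential) version. -/
lemma seq1D (a : ℝ) (ha0 : 0 < a) (ha1 : a ≤ 1) (c r : ℕ → ℝ) :
    volume (⋃ n, ball (a * c n) (r n)) ≤ volume (⋃ n, ball (c n) (r n)) := by
  have key : ∀ g : ℕ → ℝ, (⋃ n, ball (g n) (r n)) =
      ⋃ N, ⋃ n ∈ Finset.range N, ball (g n) (r n) := by
    intro g
    apply Set.Subset.antisymm
    · intro x hx
      obtain ⟨n, hn⟩ := Set.mem_iUnion.mp hx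
      exact Set.mem_iUnion.mpr ⟨n + 1, Set.mem_biUnion (Finset.self_mem_range_succ n) hn⟩
    · exact Set.iUnion_subset fun N => Set.iUnion₂_subset fun n _ => Set.subset_iUnion (fun n => ball (g n) (r n)) n
  rw [key (fun n => a * c n), key c]
  have hmono : ∀ g : ℕ → ℝ, Monotone (fun N => ⋃ n ∈ Finset.range N, ball (g n) (r n)) := by
    intro g M N hMN
    exact Set.biUnion_subset_biUnion_left (Finset.range_subset_range.mpr hMN)
  rw [(hmono (fun n => a * c n)).directed_le.measure_iUnion, (hmono c).directed_le.measure_iUnion]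
  apply iSup_mono
  intro N
  -- reduce to finset of pairs
  have himg : ∀ g : ℕ → ℝ, (⋃ n ∈ Finset.range N, ball (g n) (r n)) =
      ⋃ p ∈ (Finset.range N).image (fun n => (g n, r n)), ball p.1 p.2 := by
    intro g
    ext x
    simp only [Set.mem_iUnion, Finset.mem_image, exists_prop, Finset.mem_range]
    constructor
    · rintro ⟨n, hn, hx⟩; exact ⟨(g n, r n), ⟨n, hn, rfl⟩, hx⟩
    · rintro ⟨p, ⟨n, hn, rfl⟩, hx⟩; exact ⟨n, hn, hx⟩
  have himg' : (⋃ n ∈ Finset.range N, ball (a * c n) (r n)) =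
      ⋃ p ∈ (Finset.range N).image (fun n => (c n, r n)), ball (a * p.1) p.2 := by
    ext x
    simp only [Set.mem_iUnion, Finset.mem_image, exists_prop, Finset.mem_range]
    constructor
    · rintro ⟨n, hn, hx⟩; exact ⟨(c n, r n), ⟨n, hn, rfl⟩, hx⟩
    · rintro ⟨p, ⟨n, hn, rfl⟩, hx⟩; exact ⟨n, hn, hx⟩
  rw [himg c, himg']
  exact finite1D a ha0 ha1 _ _ le_rfl

/-- Arbitrary-index version via countable subcover. -/
lemma union1D (a : ℝ) (ha0 : 0 < a) (ha1 : a ≤ 1) {ι : Type*} (c r : ι → ℝ) :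
    volume (⋃ i, ball (a * c i) (r i)) ≤ volume (⋃ i, ball (c i) (r i)) := by
  obtain ⟨T, hTc, hTU⟩ := TopologicalSpace.isOpen_iUnion_countable
    (fun i => ball (a * c i) (r i)) (fun i => isOpen_ball)
  rcases T.eq_empty_or_nonempty with hT | hT
  · rw [← hTU, hT]; simp
  obtain ⟨f, hf⟩ := hTc.exists_eq_range hT
  calc volume (⋃ i, ball (a * c i) (r i)) = volume (⋃ i ∈ T, ball (a * c i) (r i)) := by
        rw [hTU]
    _ = volume (⋃ n, ball (a * c (f n)) (r (f n))) := by
        rw [hf, Set.biUnion_range]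
    _ ≤ volume (⋃ n, ball (c (f n)) (r (f n))) := seq1D a ha0 ha1 _ _
    _ ≤ volume (⋃ i, ball (c i) (r i)) :=
        measure_mono (Set.iUnion_subset fun n => Set.subset_iUnion (fun i => ball (c i) (r i)) (f n))

open Set in
lemma key_measure (m : ℕ) (a : ℝ) (ha0 : 0 < a) (ha1 : a ≤ 1)
    (L : EuclideanSpace ℝ (Fin (m+1)) → EuclideanSpace ℝ (Fin (m+1)))
    (hLdef : L = fun x : EuclideanSpace ℝ (Fin (m+1)) => WithLp.toLp 2 fun i : Fin (m+1) => if (i : ℕ) = 0 then a * x i else x i)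
    (X : Set (EuclideanSpace ℝ (Fin (m+1)))) (t : ℝ) (ht : 0 < t) :
    volume (thickening t (L '' X)) ≤ volume (thickening t X) := by
  set e := (MeasurableEquiv.toLp 2 (Fin (m+1) → ℝ)).symm with he
  set φ := MeasurableEquiv.piFinSuccAbove (fun _ : Fin (m+1) => ℝ) 0 with hφ
  set Ψ := e.trans φ with hΨ
  -- coordinates of Ψ.symm
  have h0 : ∀ (u : ℝ) (w : Fin m → ℝ), (Ψ.symm (u, w)) 0 = u := by
    intro u w
    show (e.symm (φ.symm (u, w))) 0 = u
    simp [e, φ, MeasurableEquiv.piFinSuccAbove]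
  have hsucc : ∀ (u : ℝ) (w : Fin m → ℝ) (j : Fin m), (Ψ.symm (u, w)) j.succ = w j := by
    intro u w j
    show (e.symm (φ.symm (u, w))) j.succ = w j
    simp [e, φ, MeasurableEquiv.piFinSuccAbove]
  -- measure preservation
  have hmp : MeasurePreserving Ψ volume volume := by
    have h1 : MeasurePreserving e volume volume :=
      EuclideanSpace.volume_preserving_symm_measurableEquiv_toLp (Fin (m+1))
    have h2 : MeasurePreserving φ volume volume :=
      volume_preserving_piFinSuccAbove (fun _ : Fin (m+1) => ℝ) 0
    exact h2.comp h1
  have himage : ∀ S : Set (EuclideanSpace ℝ (Fin (m+1))), MeasurableSet S →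
      volume S = volume (Ψ '' S) := by
    intro S hS
    have hS' : MeasurableSet (Ψ '' S) := Ψ.measurableSet_image.mpr hS
    rw [← hmp.measure_preimage hS'.nullMeasurableSet, Set.preimage_image_eq S Ψ.injective]
  -- the distance computation
  have hdist : ∀ (u : ℝ) (w : Fin m → ℝ) (y : EuclideanSpace ℝ (Fin (m+1))),
      dist (Ψ.symm (u, w)) y < t ↔
        u ∈ ball (y 0) (Real.sqrt (t^2 - ∑ j : Fin m, (w j - y j.succ)^2)) := by
    intro u w y
    rw [EuclideanSpace.dist_eq, Real.sqrt_lt' ht, Fin.sum_univ_succ]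
    simp only [h0, hsucc, Real.dist_eq, sq_abs]
    rw [Real.ball_eq_Ioo, Set.mem_Ioo]
    constructor
    · intro h
      have hq : (u - y 0)^2 < t^2 - ∑ j : Fin m, (w j - y j.succ)^2 := by
        linarith
      have habs : |u - y 0| < Real.sqrt (t^2 - ∑ j : Fin m, (w j - y j.succ)^2) := by
        rw [Real.lt_sqrt (abs_nonneg _), sq_abs]; exact hq
      rw [abs_lt] at habs
      constructor <;> linarith [habs.1, habs.2]
    · intro ⟨h1, h2⟩
      have habs : |u - y 0| < Real.sqrt (t^2 - ∑ j : Fin m, (w j - y j.succ)^2) := by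
        rw [abs_lt]; constructor <;> linarith
      have hq : (u - y 0)^2 < t^2 - ∑ j : Fin m, (w j - y j.succ)^2 := by
        rw [← sq_abs, ← Real.lt_sqrt (abs_nonneg _)]; exact habs
      linarith
  -- slices
  have hsliceX : ∀ w : Fin m → ℝ,
      (fun u => (u, w)) ⁻¹' (Ψ '' thickening t X) =
        ⋃ x : X, ball ((x : EuclideanSpace ℝ (Fin (m+1))) 0)
          (Real.sqrt (t^2 - ∑ j : Fin m, (w j - (x : EuclideanSpace ℝ (Fin (m+1))) j.succ)^2)) := by
    intro w
    rw [Ψ.image_eq_preimage_symm]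
    ext u
    simp only [Set.mem_preimage, Metric.mem_thickening_iff, Set.mem_iUnion]
    constructor
    · rintro ⟨z, hz, hd⟩
      exact ⟨⟨z, hz⟩, (hdist u w z).mp hd⟩
    · rintro ⟨⟨z, hz⟩, hu⟩
      exact ⟨z, hz, (hdist u w z).mpr hu⟩
  have hsliceL : ∀ w : Fin m → ℝ,
      (fun u => (u, w)) ⁻¹' (Ψ '' thickening t (L '' X)) =
        ⋃ x : X, ball (a * (x : EuclideanSpace ℝ (Fin (m+1))) 0)
          (Real.sqrt (t^2 - ∑ j : Fin m, (w j - (x : EuclideanSpace ℝ (Fin (m+1))) j.succ)^2)) := by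
    intro w
    have hL0 : ∀ x : EuclideanSpace ℝ (Fin (m+1)), (L x) 0 = a * x 0 := by
      intro x; simp [hLdef]
    have hLs : ∀ (x : EuclideanSpace ℝ (Fin (m+1))) (j : Fin m), (L x) j.succ = x j.succ := by
      intro x j; simp [hLdef, Fin.val_succ]
    rw [Ψ.image_eq_preimage_symm]
    ext u
    simp only [Set.mem_preimage, Metric.mem_thickening_iff, Set.mem_iUnion]
    constructor
    · rintro ⟨z, ⟨x, hx, rfl⟩, hd⟩
      refine ⟨⟨x, hx⟩, ?_⟩
      have := (hdist u w (L x)).mp hd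
      rwa [hL0, show (∑ j : Fin m, (w j - (L x) j.succ)^2)
        = ∑ j : Fin m, (w j - x j.succ)^2 from by simp only [hLs]] at this
    · rintro ⟨⟨x, hx⟩, hu⟩
      refine ⟨L x, ⟨x, hx, rfl⟩, (hdist u w (L x)).mpr ?_⟩
      rwa [hL0, show (∑ j : Fin m, (w j - (L x) j.succ)^2)
        = ∑ j : Fin m, (w j - x j.succ)^2 from by simp only [hLs]]
  -- put it together with Fubini
  have hmeasX : MeasurableSet (thickening t X) := isOpen_thickening.measurableSet
  have hmeasL : MeasurableSet (thickening t (L '' X)) := isOpen_thickening.measurableSet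
  calc volume (thickening t (L '' X))
      = volume (Ψ '' thickening t (L '' X)) := himage _ hmeasL
    _ = ∫⁻ w, volume ((fun u => (u, w)) ⁻¹' (Ψ '' thickening t (L '' X))) ∂volume := by
        rw [Measure.volume_eq_prod, Measure.prod_apply_symm (Ψ.measurableSet_image.mpr hmeasL)]
    _ ≤ ∫⁻ w, volume ((fun u => (u, w)) ⁻¹' (Ψ '' thickening t X)) ∂volume := by
        apply lintegral_mono
        intro w
        dsimp only
        rw [hsliceX w, hsliceL w]
        exact union1D a ha0 ha1 _ _
    _ = volume (Ψ '' thickening t X) := by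
        rw [Measure.volume_eq_prod, Measure.prod_apply_symm (Ψ.measurableSet_image.mpr hmeasX)]
    _ = volume (thickening t X) := (himage _ hmeasX).symm

/-- Shrinking the first coordinate by a factor `0 < a ≤ 1` does not increase the
lower `k`-dimensional Minkowski content: `M_k(L(X)) ≤ M_k(X)`. -/
theorem shrink_minkowski (n k : ℕ) (hn : 1 ≤ n) (hkn : k ≤ n)
    (a : ℝ) (ha0 : 0 < a) (ha1 : a ≤ 1)
    (L : EuclideanSpace ℝ (Fin n) → EuclideanSpace ℝ (Fin n))
    (hL : L = fun x : EuclideanSpace ℝ (Fin n) => WithLp.toLp 2 fun i : Fin n => if (i : ℕ) = 0 then a * x i else x i)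
    (X : Set (EuclideanSpace ℝ (Fin n))) :
    lowerMinkowskiContent n k (L '' X) ≤ lowerMinkowskiContent n k X := by
  obtain ⟨m, rfl⟩ : ∃ m, n = m + 1 := ⟨n - 1, by omega⟩
  unfold lowerMinkowskiContent
  refine Filter.liminf_le_liminf ?_ (by isBoundedDefault) (by isBoundedDefault)
  filter_upwards [eventually_mem_nhdsWithin] with t ht
  exact ENNReal.div_le_div_right
    (key_measure m a ha0 ha1 L hL X t (Set.mem_Ioi.mp ht)) _
end

section
/- Let 0 < a ≤ 1 and let I be an arbitrary index set with functions c : I → ℝ (centers) and r : I → [0, ∞) (radii). Then the Lebesgue measure of the union of the shrunk-center intervals ⋃_{i ∈ I} [a·c(i) − r(i), a·c(i) + r(i)] is at most the Lebesgue measure of the union of the original intervals ⋃_{i ∈ I} [c(i) − r(i), c(i) + r(i)]. In other words, shrinking all centers of a family of intervals toward the origin by a common factor a ∈ (0,1], while keeping their lengths, does not increase the measure of their union. -/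
open MeasureTheory Set

/-- Shrinking all centers of a family of intervals toward the origin by a common factor
`a ∈ (0,1]`, while keeping their lengths, does not increase the Lebesgue measure of
their union. -/
theorem shrink_centers_measure_le {I : Type*} (a : ℝ) (ha0 : 0 < a) (ha1 : a ≤ 1)
    (c : I → ℝ) (r : I → ℝ) (hr : ∀ i, 0 ≤ r i) :
    volume (⋃ i, Set.Icc (a * c i - r i) (a * c i + r i)) ≤
      volume (⋃ i, Set.Icc (c i - r i) (c i + r i)) := by
  classical
  rcases isEmpty_or_nonempty I with hI | hI
  · simp
  set V := ⋃ i, Set.Icc (a * c i - r i) (a * c i + r i) with hV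
  set U := ⋃ i, Set.Icc (c i - r i) (c i + r i) with hU
  -- Key step: for every open `O ⊇ U`, we have `volume V ≤ volume O`.
  have key : ∀ O : Set ℝ, IsOpen O → U ⊆ O → volume V ≤ volume O := by
    intro O hO hUO
    have hmemO : ∀ i, Set.Icc (c i - r i) (c i + r i) ⊆ O := fun i =>
      (subset_iUnion (fun i => Set.Icc (c i - r i) (c i + r i)) i).trans hUO
    have hcO : ∀ i, c i ∈ O := fun i => hmemO i ⟨by linarith [hr i], by linarith [hr i]⟩
    set C : I → Set ℝ := fun i => connectedComponentIn O (c i) with hC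
    have hCopen : ∀ i, IsOpen (C i) := fun i => hO.connectedComponentIn
    have hCconn : ∀ i, IsConnected (C i) := fun i =>
      isConnected_connectedComponentIn_iff.mpr (hcO i)
    have hcmem : ∀ i, c i ∈ C i := fun i => mem_connectedComponentIn (hcO i)
    have hIccC : ∀ i, Set.Icc (c i - r i) (c i + r i) ⊆ C i := fun i =>
      isPreconnected_Icc.subset_connectedComponentIn
        ⟨by linarith [hr i], by linarith [hr i]⟩ (hmemO i)
    have hCsubO : ∀ i, C i ⊆ O := fun i => connectedComponentIn_subset O (c i)
    -- The enlarged target interval for each component.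
    set J : Set ℝ → Set ℝ := fun s =>
      if BddBelow s ∧ BddAbove s then
        Set.Icc (a * sInf s - (1 - a) * (sSup s - sInf s) / 2)
                (a * sSup s + (1 - a) * (sSup s - sInf s) / 2)
      else Set.univ with hJ
    -- Claim A: each shrunk interval is contained in `J` of its component.
    have claimA : ∀ i, Set.Icc (a * c i - r i) (a * c i + r i) ⊆ J (C i) := by
      intro i
      by_cases hb : BddBelow (C i) ∧ BddAbove (C i)
      · have h1 : sInf (C i) ≤ c i - r i :=
          csInf_le hb.1 (hIccC i ⟨le_refl _, by linarith [hr i]⟩)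
        have h2 : c i + r i ≤ sSup (C i) :=
          le_csSup hb.2 (hIccC i ⟨by linarith [hr i], le_refl _⟩)
        have hJeq : J (C i) =
            Set.Icc (a * sInf (C i) - (1 - a) * (sSup (C i) - sInf (C i)) / 2)
                    (a * sSup (C i) + (1 - a) * (sSup (C i) - sInf (C i)) / 2) := by
          simp [hJ, hb]
        rw [hJeq]
        apply Set.Icc_subset_Icc
        · nlinarith [hr i, mul_nonneg (sub_nonneg.mpr ha1) (hr i)]
        · nlinarith [hr i, mul_nonneg (sub_nonneg.mpr ha1) (hr i)]
      · simp [hJ, hb]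
    -- Claim B: `J` of a component has no greater measure than the component.
    have claimB : ∀ i, volume (J (C i)) ≤ volume (C i) := by
      intro i
      by_cases hb : BddBelow (C i) ∧ BddAbove (C i)
      · have hJeq : J (C i) =
            Set.Icc (a * sInf (C i) - (1 - a) * (sSup (C i) - sInf (C i)) / 2)
                    (a * sSup (C i) + (1 - a) * (sSup (C i) - sInf (C i)) / 2) := by
          simp [hJ, hb]
        have hIoo : Set.Ioo (sInf (C i)) (sSup (C i)) ⊆ C i :=
          (hCconn i).Ioo_csInf_csSup_subset hb.1 hb.2
        calc volume (J (C i))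
            = ENNReal.ofReal (sSup (C i) - sInf (C i)) := by
              rw [hJeq, Real.volume_Icc]; congr 1; ring
          _ = volume (Set.Ioo (sInf (C i)) (sSup (C i))) := by rw [Real.volume_Ioo]
          _ ≤ volume (C i) := measure_mono hIoo
      · have hord : OrdConnected (C i) := (hCconn i).isPreconnected.ordConnected
        have htop : volume (C i) = ⊤ := by
          rcases not_and_or.mp hb with hnb | hnb
          · have hsub : Set.Iic (c i) ⊆ C i := by
              intro z hz
              obtain ⟨y, hy, hyz⟩ := not_bddBelow_iff.mp hnb z
              exact hord.out hy (hcmem i) ⟨hyz.le, hz⟩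
            have : volume (Set.Iic (c i)) ≤ volume (C i) := measure_mono hsub
            rw [Real.volume_Iic] at this
            exact top_le_iff.mp this
          · have hsub : Set.Ici (c i) ⊆ C i := by
              intro z hz
              obtain ⟨y, hy, hyz⟩ := not_bddAbove_iff.mp hnb z
              exact hord.out (hcmem i) hy ⟨hz, hyz.le⟩
            have : volume (Set.Ici (c i)) ≤ volume (C i) := measure_mono hsub
            rw [Real.volume_Ici] at this
            exact top_le_iff.mp this
        rw [htop]
        exact le_top
    -- The set of components is countable.
    set T : Set (Set ℝ) := Set.range C with hT
    have hTdisj : T.PairwiseDisjoint id := by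
      rintro s ⟨i, rfl⟩ t ⟨j, rfl⟩ hst
      rw [Function.onFun, Set.disjoint_left]
      intro x hxs hxt
      exact hst (by
        show connectedComponentIn O (c i) = connectedComponentIn O (c j)
        rw [connectedComponentIn_eq hxs, connectedComponentIn_eq hxt])
    have hTcount : T.Countable := by
      apply hTdisj.countable_of_isOpen
      · rintro s ⟨i, rfl⟩; exact hCopen i
      · rintro s ⟨i, rfl⟩; exact ⟨c i, hcmem i⟩
    haveI : Countable T := hTcount.to_subtype
    -- Put everything together.
    have hVsub : V ⊆ ⋃ s : T, J (s : Set ℝ) := by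
      intro x hx
      obtain ⟨i, hxi⟩ := Set.mem_iUnion.mp hx
      exact Set.mem_iUnion.mpr ⟨⟨C i, ⟨i, rfl⟩⟩, claimA i hxi⟩
    calc volume V ≤ volume (⋃ s : T, J (s : Set ℝ)) := measure_mono hVsub
      _ ≤ ∑' s : T, volume (J (s : Set ℝ)) := measure_iUnion_le _
      _ ≤ ∑' s : T, volume (s : Set ℝ) := by
          apply ENNReal.tsum_le_tsum
          rintro ⟨s, i, rfl⟩
          exact claimB i
      _ = volume (⋃₀ T) := by
          rw [measure_sUnion hTcount hTdisj]
          rintro s ⟨i, rfl⟩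
          exact (hCopen i).measurableSet
      _ ≤ volume O := measure_mono (Set.sUnion_subset (by rintro s ⟨i, rfl⟩; exact hCsubO i))
  -- Conclude by outer regularity of Lebesgue measure.
  by_contra hcon
  push_neg at hcon
  obtain ⟨O, hUO, hOopen, hOlt⟩ := Set.exists_isOpen_lt_of_lt U (volume V) hcon
  exact absurd (key O hOopen hUO) (not_le.mpr hOlt)
end
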